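/- arXiv:1701.07216 — 2 statements merged into one kernel-verified Lean document; each statement's English description precedes it below -/
import Mathlib

section
/- For every n ≥ 1, there is a bijection between tree-like tableaux of size n and alternative tableaux of size n in which every column contains an up arrow, which sends left(T) to urr(T')-1, noc(T) to noc(T'), and top(T) to the number of arrows in the topmost row of T'. -/
open Finset Polynomial
open scoped Classical

/-! ### Tree-like tableaux (grid model)
A cell is a pair (row index, column index), both 0-based.  A Ferrers diagram
is a finite lower set of cells.  A tree-like tableau of size `n` is a pair
`(F, P)` where `P` is the set of pointed cells of the diagram `F`. -/

def IsFerrersGrid (F : Finset (ℕ × ℕ)) : Prop :=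
  ∀ p ∈ F, ∀ i j : ℕ, i ≤ p.1 → j ≤ p.2 → (i, j) ∈ F

def IsTLT (F P : Finset (ℕ × ℕ)) : Prop :=
  F.Nonempty ∧ IsFerrersGrid F ∧ P ⊆ F ∧ (0, 0) ∈ P ∧
  (∀ p ∈ P, p ≠ (0, 0) →
    Xor' (∃ i < p.1, (i, p.2) ∈ P) (∃ j < p.2, (p.1, j) ∈ P)) ∧
  (∀ p ∈ F, ∃ q ∈ P, q.1 = p.1) ∧
  (∀ p ∈ F, ∃ q ∈ P, q.2 = p.2)

/-- The finite set of tree-like tableaux of size `n`. -/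
noncomputable def TLT (n : ℕ) : Finset (Finset (ℕ × ℕ) × Finset (ℕ × ℕ)) :=
  ((Finset.range n ×ˢ Finset.range n).powerset ×ˢ
    (Finset.range n ×ˢ Finset.range n).powerset).filter
    (fun T => IsTLT T.1 T.2 ∧ T.2.card = n)

/-- number of non-root points in the topmost row -/
noncomputable def topT (P : Finset (ℕ × ℕ)) : ℕ :=
  (P.filter (fun p => p.1 = 0 ∧ p.2 ≠ 0)).card
/-- number of non-root points in the leftmost column -/
noncomputable def leftT (P : Finset (ℕ × ℕ)) : ℕ :=
  (P.filter (fun p => p.2 = 0 ∧ p.1 ≠ 0)).card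
/-- corners of a Ferrers diagram -/
noncomputable def cornersT (F : Finset (ℕ × ℕ)) : Finset (ℕ × ℕ) :=
  F.filter (fun p => (p.1 + 1, p.2) ∉ F ∧ (p.1, p.2 + 1) ∉ F)
/-- non-occupied corners -/
noncomputable def nocT (F P : Finset (ℕ × ℕ)) : ℕ :=
  ((cornersT F).filter (fun p => p ∉ P)).card
/-- occupied corners -/
noncomputable def ocT (F P : Finset (ℕ × ℕ)) : ℕ :=
  ((cornersT F).filter (fun p => p ∈ P)).card
/-- symmetric (invariant under reflection across the main diagonal) -/
def IsSymTLT (F P : Finset (ℕ × ℕ)) : Prop :=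
  F.image Prod.swap = F ∧ P.image Prod.swap = P

/-! ### Alternative tableaux (border-label model)
A Ferrers diagram of size `n` (empty rows and columns allowed) is encoded by
the set `C ⊆ {1,…,n}` of its column labels (labels of the south-east border
steps, read from north-east to south-west); the remaining labels are row
labels.  Row `r` and column `c` intersect in a cell (written `(r, c)`)
exactly when `r < c`.  Inside a row, cells further to the left have *larger*
column labels; inside a column, cells further up have *smaller* row labels.
An alternative tableau is `(C, L, U)` where `L` (resp. `U`) is the set of
cells containing a left (resp. up) arrow. -/

def IsAT (n : ℕ) (C : Finset ℕ) (L U : Finset (ℕ × ℕ)) : Prop :=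
  C ⊆ Finset.Icc 1 n ∧ Disjoint L U ∧
  (∀ p ∈ L ∪ U, p.1 ∈ Finset.Icc 1 n ∧ p.1 ∉ C ∧ p.2 ∈ C ∧ p.1 < p.2) ∧
  (∀ p ∈ L, ∀ c' : ℕ, p.2 < c' → (p.1, c') ∉ L ∪ U) ∧
  (∀ p ∈ U, ∀ r' : ℕ, r' < p.1 → (r', p.2) ∉ L ∪ U)

/-- the finite set of alternative tableaux of size `n` -/
noncomputable def ATset (n : ℕ) :
    Finset (Finset ℕ × Finset (ℕ × ℕ) × Finset (ℕ × ℕ)) :=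
  ((Finset.Icc 1 n).powerset ×ˢ
    ((Finset.Icc 1 n ×ˢ Finset.Icc 1 n).powerset ×ˢ
      (Finset.Icc 1 n ×ˢ Finset.Icc 1 n).powerset)).filter
    (fun T => IsAT n T.1 T.2.1 T.2.2)

/-- alternative tableaux of size `n` in which every column contains an up arrow -/
noncomputable def ATstar (n : ℕ) :
    Finset (Finset ℕ × Finset (ℕ × ℕ) × Finset (ℕ × ℕ)) :=
  (ATset n).filter (fun T => ∀ c ∈ T.1, ∃ p ∈ T.2.2, p.2 = c)

/-- label of the topmost row -/
noncomputable def topRowA (n : ℕ) (C : Finset ℕ) : ℕ :=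
  WithTop.untopD 0 ((Finset.Icc 1 n \ C).min)
/-- number of arrows in the topmost row -/
noncomputable def topA (n : ℕ) (C : Finset ℕ) (L U : Finset (ℕ × ℕ)) : ℕ :=
  ((L ∪ U).filter (fun p => p.1 = topRowA n C)).card
/-- number of unrestricted rows (rows with no left arrow) -/
noncomputable def urrA (n : ℕ) (C : Finset ℕ) (L : Finset (ℕ × ℕ)) : ℕ :=
  ((Finset.Icc 1 n \ C).filter (fun r => ∀ p ∈ L, p.1 ≠ r)).card
/-- number of non-occupied corners (the corners are exactly the cells `(c-1, c)`
with `c` a column label and `c-1` a row label) -/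
noncomputable def nocA (n : ℕ) (C : Finset ℕ) (L U : Finset (ℕ × ℕ)) : ℕ :=
  (C.filter (fun c => c - 1 ∈ Finset.Icc 1 n \ C ∧ (c - 1, c) ∉ L ∪ U)).card
/-- symmetric alternative tableau of size `2n` (reflection across the main
diagonal exchanges border label `k` with `2n+1-k`, rows with columns and
left arrows with up arrows) -/
def IsSymAT (n : ℕ) (C : Finset ℕ) (L U : Finset (ℕ × ℕ)) : Prop :=
  (∀ k ∈ Finset.Icc 1 (2 * n), (k ∈ C ↔ (2 * n + 1 - k) ∉ C)) ∧
  (∀ r c : ℕ, (r, c) ∈ L ↔ (2 * n + 1 - c, 2 * n + 1 - r) ∈ U)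

/-! ### Linked partitions (linear representation / arc model)
A linked partition of `{1,…,n}` is identified with its set of arcs `(i, j)`,
`i < j`: each vertex is the right-hand endpoint of at most one arc. -/

def IsLP (n : ℕ) (A : Finset (ℕ × ℕ)) : Prop :=
  (∀ p ∈ A, 1 ≤ p.1 ∧ p.1 < p.2 ∧ p.2 ≤ n) ∧
  (∀ p ∈ A, ∀ q ∈ A, p.2 = q.2 → p.1 = q.1)

noncomputable def LP (n : ℕ) : Finset (Finset (ℕ × ℕ)) :=
  ((Finset.Icc 1 n ×ˢ Finset.Icc 1 n).powerset).filter (IsLP n)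

/-- number of origins plus singletons (= vertices with no incoming arc) -/
noncomputable def osL (n : ℕ) (A : Finset (ℕ × ℕ)) : ℕ :=
  ((Finset.Icc 1 n).filter (fun j => ∀ p ∈ A, p.2 ≠ j)).card
/-- number of arcs with left-hand endpoint `1` -/
noncomputable def oneL (A : Finset (ℕ × ℕ)) : ℕ :=
  (A.filter (fun p => p.1 = 1)).card
/-- a destination: only a right-hand endpoint -/
def IsDest (A : Finset (ℕ × ℕ)) (j : ℕ) : Prop :=
  (∃ p ∈ A, p.2 = j) ∧ ∀ p ∈ A, p.1 ≠ j

/-- consecutive pairs of a finite set of naturals -/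
noncomputable def consecPairs (S : Finset ℕ) : Finset (ℕ × ℕ) :=
  (S ×ˢ S).filter (fun p => p.1 < p.2 ∧ ∀ k ∈ S, ¬(p.1 < k ∧ k < p.2))

/-- the set of row labels of cells of column `c` containing an arrow -/
noncomputable def colRows (L U : Finset (ℕ × ℕ)) (c : ℕ) : Finset ℕ :=
  ((L ∪ U).filter (fun p => p.2 = c)).image Prod.fst

/-- the map `Φ`: for each column `j`, with the up arrow in row `i₁` and the
left arrows in rows `i₂ < … < i_t`, draw the arcs `(i₁,i₂), …, (i_{t-1},i_t), (i_t, j)`,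
i.e. the consecutive pairs of `{i₁,…,i_t, j}`. -/
noncomputable def Phi (T : Finset ℕ × Finset (ℕ × ℕ) × Finset (ℕ × ℕ)) :
    Finset (ℕ × ℕ) :=
  T.1.biUnion (fun c => consecPairs (insert c (colRows T.2.1 T.2.2 c)))

/-! ### Type B alternative tableaux
Encoded by `(C, L, U)` with `C ⊆ Icc 1 n` the set of column labels of the
subdiagram; rows of the shifted diagram are labelled by
`(Icc 1 n \ C) ∪ (-C)`, rows higher up having smaller labels.  Row `x` and
column `c` intersect in a cell exactly when (`x > 0` and `x < c`) or
(`x < 0` and `-x ≤ c`); the cell `(-c, c)` is the diagonal cell of row `-c`. -/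

def cellB (n : ℕ) (C : Finset ℤ) (x c : ℤ) : Prop :=
  c ∈ C ∧ ((1 ≤ x ∧ x ≤ (n : ℤ) ∧ x ∉ C ∧ x < c) ∨ (x < 0 ∧ -x ∈ C ∧ -x ≤ c))

def IsATB (n : ℕ) (C : Finset ℤ) (L U : Finset (ℤ × ℤ)) : Prop :=
  C ⊆ Finset.Icc 1 (n : ℤ) ∧ Disjoint L U ∧
  (∀ p ∈ L ∪ U, p.2 ∈ C ∧
    ((1 ≤ p.1 ∧ p.1 ≤ (n : ℤ) ∧ p.1 ∉ C ∧ p.1 < p.2) ∨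
      (p.1 < 0 ∧ -p.1 ∈ C ∧ -p.1 < p.2))) ∧
  (∀ p ∈ L, ∀ c' : ℤ, p.2 < c' → (p.1, c') ∉ L ∪ U) ∧
  (∀ p ∈ U, ∀ x' : ℤ, x' < p.1 → (x', p.2) ∉ L ∪ U) ∧
  (∀ i ∈ C, (∃ p ∈ U, p.2 = i) → ∀ c' : ℤ, (-i, c') ∉ L ∪ U)

noncomputable def ATB (n : ℕ) :
    Finset (Finset ℤ × Finset (ℤ × ℤ) × Finset (ℤ × ℤ)) :=
  ((Finset.Icc (1 : ℤ) (n : ℤ)).powerset ×ˢ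
    ((Finset.Icc (-(n : ℤ)) (n : ℤ) ×ˢ Finset.Icc (1 : ℤ) (n : ℤ)).powerset ×ˢ
      (Finset.Icc (-(n : ℤ)) (n : ℤ) ×ˢ Finset.Icc (1 : ℤ) (n : ℤ)).powerset)).filter
    (fun T => IsATB n T.1 T.2.1 T.2.2)

/-- the row labels of a type B alternative tableau -/
noncomputable def rowsB (n : ℕ) (C : Finset ℤ) : Finset ℤ :=
  (Finset.Icc (1 : ℤ) (n : ℤ) \ C) ∪ C.image (fun c => -c)

/-- number of unrestricted rows: row `x` is unrestricted when it contains no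
left arrow and column `|x|` (if it exists) contains no up arrow -/
noncomputable def urrB (n : ℕ) (C : Finset ℤ) (L U : Finset (ℤ × ℤ)) : ℕ :=
  ((rowsB n C).filter (fun x => (∀ p ∈ L, p.1 ≠ x) ∧ ∀ p ∈ U, p.2 ≠ |x|)).card

/-- the corners of the shifted Ferrers diagram -/
noncomputable def cornersB (n : ℕ) (C : Finset ℤ) : Finset (ℤ × ℤ) :=
  (Finset.Icc (-(n : ℤ)) (n : ℤ) ×ˢ Finset.Icc (1 : ℤ) (n : ℤ)).filter
    (fun p => cellB n C p.1 p.2 ∧ (∀ x' : ℤ, p.1 < x' → ¬ cellB n C x' p.2) ∧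
      (∀ c' : ℤ, c' < p.2 → ¬ cellB n C p.1 c'))

/-- number of non-occupied diagonal corners -/
noncomputable def nocDiagB (n : ℕ) (C : Finset ℤ) (L U : Finset (ℤ × ℤ)) : ℕ :=
  ((cornersB n C).filter (fun p => p.1 = -p.2 ∧ p ∉ L ∪ U)).card
/-- number of non-occupied non-diagonal corners -/
noncomputable def nocOffB (n : ℕ) (C : Finset ℤ) (L U : Finset (ℤ × ℤ)) : ℕ :=
  ((cornersB n C).filter (fun p => p.1 ≠ -p.2 ∧ p ∉ L ∪ U)).card

/-! ### Type B linked partitions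
A pair `(V, A)`: for each `i ∈ {1,…,n}` exactly one of `i, -i` belongs to
the vertex set `V`; `A` is the set of arcs `(x, y)`, `x < y`, with each
vertex the right-hand endpoint of at most one arc. -/

def IsLPB (n : ℕ) (V : Finset ℤ) (A : Finset (ℤ × ℤ)) : Prop :=
  (∀ v ∈ V, 1 ≤ |v| ∧ |v| ≤ (n : ℤ)) ∧
  (∀ i ∈ Finset.Icc (1 : ℤ) (n : ℤ), ((i ∈ V ∧ -i ∉ V) ∨ (-i ∈ V ∧ i ∉ V))) ∧
  (∀ p ∈ A, p.1 ∈ V ∧ p.2 ∈ V ∧ p.1 < p.2) ∧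
  (∀ p ∈ A, ∀ q ∈ A, p.2 = q.2 → p.1 = q.1)

noncomputable def LPB (n : ℕ) : Finset (Finset ℤ × Finset (ℤ × ℤ)) :=
  ((Finset.Icc (-(n : ℤ)) (n : ℤ)).powerset ×ˢ
    (Finset.Icc (-(n : ℤ)) (n : ℤ) ×ˢ Finset.Icc (-(n : ℤ)) (n : ℤ)).powerset).filter
    (fun T => IsLPB n T.1 T.2)

/-- number of origins plus singletons (= vertices with no incoming arc) -/
noncomputable def osB (V : Finset ℤ) (A : Finset (ℤ × ℤ)) : ℕ :=
  (V.filter (fun v => ∀ p ∈ A, p.2 ≠ v)).card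

/-- a legal destination: `j` is only a right-hand endpoint, and its incoming
arc `(a, j)` satisfies `|a| < |j|` -/
def IsLegalDestB (A : Finset (ℤ × ℤ)) (j : ℤ) : Prop :=
  (∃ p ∈ A, p.2 = j ∧ |p.1| < |j|) ∧ ∀ p ∈ A, p.1 ≠ j

/-- consecutive pairs of a finite set of integers -/
noncomputable def consecPairsZ (S : Finset ℤ) : Finset (ℤ × ℤ) :=
  (S ×ˢ S).filter (fun p => p.1 < p.2 ∧ ∀ k ∈ S, ¬(p.1 < k ∧ k < p.2))

/-- row labels of cells of column `c` containing an arrow -/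
noncomputable def colRowsB (L U : Finset (ℤ × ℤ)) (c : ℤ) : Finset ℤ :=
  ((L ∪ U).filter (fun p => p.2 = c)).image Prod.fst

/-- column `c` contains an up arrow -/
def HasUp (U : Finset (ℤ × ℤ)) (c : ℤ) : Prop := ∃ p ∈ U, p.2 = c

/-- the map `Φ_B`: columns with an up arrow give positive vertices and chains
of arcs through their arrows (consecutive pairs of the arrow rows together
with the column label); columns without an up arrow give negative vertices
`-j` and arcs from `-j` to each row containing a left arrow of that column;
rows give positive vertices. -/
noncomputable def PhiB (n : ℕ) (T : Finset ℤ × Finset (ℤ × ℤ) × Finset (ℤ × ℤ)) :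
    Finset ℤ × Finset (ℤ × ℤ) :=
  ((Finset.Icc (1 : ℤ) (n : ℤ) \ T.1) ∪ T.1.filter (fun c => HasUp T.2.2 c) ∪
      (T.1.filter (fun c => ¬ HasUp T.2.2 c)).image (fun c => -c),
    (T.1.filter (fun c => HasUp T.2.2 c)).biUnion
        (fun c => consecPairsZ (insert c (colRowsB T.2.1 T.2.2 c))) ∪
      (T.1.filter (fun c => ¬ HasUp T.2.2 c)).biUnion
        (fun c => (colRowsB T.2.1 T.2.2 c).image (fun r => (-c, r))))


/-! ### Auxiliary development for Statement 4 -/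

namespace Aux4

/-- a lower set of naturals equals an initial segment -/
lemma lower_mem_iff {S : Finset ℕ} (h : ∀ a ∈ S, ∀ b, b ≤ a → b ∈ S) :
    ∀ x, x ∈ S ↔ x < S.card := by
  intro x
  constructor
  · intro hx
    have hsub : Finset.range (x + 1) ⊆ S := by
      intro b hb
      exact h x hx b (by simpa using Nat.lt_succ_iff.mp (Finset.mem_range.mp hb))
    have := Finset.card_le_card hsub
    simpa using this
  · intro hx
    by_contra hxS
    have hsub : S ⊆ Finset.range x := by
      intro a ha
      rcases Nat.lt_or_ge a x with h1 | h1
      · simpa using h1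
      · exact absurd (h a ha x h1) hxS
    have := Finset.card_le_card hsub
    simp at this
    omega

noncomputable def lam (F : Finset (ℕ × ℕ)) (i : ℕ) : ℕ :=
  (F.filter (fun p => p.1 = i)).card

noncomputable def hgt (F : Finset (ℕ × ℕ)) (j : ℕ) : ℕ :=
  (F.filter (fun p => p.2 = j)).card

lemma mem_iff_lt_lam {F : Finset (ℕ × ℕ)} (hF : IsFerrersGrid F) (i j : ℕ) :
    (i, j) ∈ F ↔ j < lam F i := by
  set S := (F.filter (fun p => p.1 = i)).image Prod.snd with hS
  have hcard : S.card = lam F i := by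
    rw [hS, lam]
    apply Finset.card_image_of_injOn
    intro p hp q hq hpq
    simp only [Finset.coe_filter, Set.mem_setOf_eq] at hp hq
    exact Prod.ext (hp.2.trans hq.2.symm) hpq
  have hmemS : ∀ j', j' ∈ S ↔ (i, j') ∈ F := by
    intro j'
    simp only [hS, Finset.mem_image, Finset.mem_filter]
    constructor
    · rintro ⟨p, ⟨hpF, hp1⟩, hp2⟩
      rcases p with ⟨a, b⟩
      simp_all
    · intro h; exact ⟨(i, j'), ⟨h, rfl⟩, rfl⟩
  have hlow : ∀ a ∈ S, ∀ b, b ≤ a → b ∈ S := by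
    intro a ha b hb
    rw [hmemS] at ha ⊢
    exact hF _ ha i b le_rfl hb
  rw [← hmemS, lower_mem_iff hlow, hcard]

lemma mem_iff_lt_hgt {F : Finset (ℕ × ℕ)} (hF : IsFerrersGrid F) (i j : ℕ) :
    (i, j) ∈ F ↔ i < hgt F j := by
  set S := (F.filter (fun p => p.2 = j)).image Prod.fst with hS
  have hcard : S.card = hgt F j := by
    rw [hS, hgt]
    apply Finset.card_image_of_injOn
    intro p hp q hq hpq
    simp only [Finset.coe_filter, Set.mem_setOf_eq] at hp hq
    exact Prod.ext hpq (hp.2.trans hq.2.symm)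
  have hmemS : ∀ i', i' ∈ S ↔ (i', j) ∈ F := by
    intro i'
    simp only [hS, Finset.mem_image, Finset.mem_filter]
    constructor
    · rintro ⟨p, ⟨hpF, hp1⟩, hp2⟩
      rcases p with ⟨a, b⟩
      simp_all
    · intro h; exact ⟨(i', j), ⟨h, rfl⟩, rfl⟩
  have hlow : ∀ a ∈ S, ∀ b, b ≤ a → b ∈ S := by
    intro a ha b hb
    rw [hmemS] at ha ⊢
    exact hF _ ha b j hb le_rfl
  rw [← hmemS, lower_mem_iff hlow, hcard]

lemma lam_anti {F : Finset (ℕ × ℕ)} (hF : IsFerrersGrid F) {i i' : ℕ} (h : i ≤ i') :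
    lam F i' ≤ lam F i := by
  by_contra hc
  push_neg at hc
  have h1 : (i', lam F i) ∈ F := (mem_iff_lt_lam hF _ _).2 hc
  have h2 : (i, lam F i) ∈ F := hF _ h1 i _ h le_rfl
  exact absurd ((mem_iff_lt_lam hF _ _).1 h2) (lt_irrefl _)

lemma hgt_anti {F : Finset (ℕ × ℕ)} (hF : IsFerrersGrid F) {j j' : ℕ} (h : j ≤ j') :
    hgt F j' ≤ hgt F j := by
  by_contra hc
  push_neg at hc
  have h1 : (hgt F j, j') ∈ F := (mem_iff_lt_hgt hF _ _).2 hc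
  have h2 : (hgt F j, j) ∈ F := hF _ h1 _ j le_rfl h
  exact absurd ((mem_iff_lt_hgt hF _ _).1 h2) (lt_irrefl _)

/-- the row-label map -/
noncomputable def rho (F : Finset (ℕ × ℕ)) (i : ℕ) : ℕ :=
  i + 1 + (lam F 0 - lam F i)

/-- the column-label map -/
noncomputable def gam (F : Finset (ℕ × ℕ)) (j : ℕ) : ℕ :=
  (lam F 0 - j) + hgt F j

lemma rho_strictMono {F : Finset (ℕ × ℕ)} (hF : IsFerrersGrid F) :
    StrictMono (rho F) := by
  apply strictMono_nat_of_lt_succ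
  intro i
  have h1 : lam F (i + 1) ≤ lam F i := lam_anti hF (Nat.le_succ i)
  have h2 : lam F i ≤ lam F 0 := lam_anti hF (Nat.zero_le i)
  unfold rho; omega

lemma hgt_eq_zero {F : Finset (ℕ × ℕ)} (hF : IsFerrersGrid F) {j : ℕ}
    (h : lam F 0 ≤ j) : hgt F j = 0 := by
  by_contra hc
  have h1 : (0, j) ∈ F := (mem_iff_lt_hgt hF _ _).2 (by omega)
  have := (mem_iff_lt_lam hF _ _).1 h1
  omega

lemma lam_eq_zero {F : Finset (ℕ × ℕ)} (hF : IsFerrersGrid F) {i : ℕ}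
    (h : hgt F 0 ≤ i) : lam F i = 0 := by
  by_contra hc
  have h1 : (i, 0) ∈ F := (mem_iff_lt_lam hF _ _).2 (by omega)
  have := (mem_iff_lt_hgt hF _ _).1 h1
  omega

lemma gam_lt {F : Finset (ℕ × ℕ)} (hF : IsFerrersGrid F) {j j' : ℕ}
    (h : j < j') (hj : j < lam F 0) : gam F j' < gam F j := by
  have h1 : hgt F j' ≤ hgt F j := hgt_anti hF (le_of_lt h)
  have h2 : 1 ≤ hgt F j := by
    have : (0, j) ∈ F := by
      have h0 : (0, 0) ∈ F ∨ True := Or.inr trivial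
      exact (mem_iff_lt_lam hF _ _).2 hj
    have := (mem_iff_lt_hgt hF _ _).1 this
    omega
  rcases Nat.lt_or_ge j' (lam F 0) with h3 | h3
  · unfold gam; omega
  · have h4 : hgt F j' = 0 := hgt_eq_zero hF h3
    unfold gam; omega

lemma rho_lt_gam_of_mem {F : Finset (ℕ × ℕ)} (hF : IsFerrersGrid F) {i j : ℕ}
    (hj1 : 1 ≤ j) (hij : (i, j) ∈ F) : rho F i < gam F j := by
  have h1 : i + 1 ≤ hgt F j := (mem_iff_lt_hgt hF _ _).1 hij
  have h2 : j + 1 ≤ lam F i := (mem_iff_lt_lam hF _ _).1 hij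
  have h3 : lam F i ≤ lam F 0 := lam_anti hF (Nat.zero_le i)
  unfold rho gam; omega

lemma gam_lt_rho_of_not_mem {F : Finset (ℕ × ℕ)} (hF : IsFerrersGrid F) {i j : ℕ}
    (hj2 : j < lam F 0) (hij : (i, j) ∉ F) : gam F j < rho F i := by
  have h1 : hgt F j ≤ i := by
    have := (mem_iff_lt_hgt hF i j).not.1 hij; omega
  have h2 : lam F i ≤ j := by
    have := (mem_iff_lt_lam hF i j).not.1 hij; omega
  have h3 : lam F i ≤ lam F 0 := lam_anti hF (Nat.zero_le i)
  unfold rho gam; omega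

lemma rho_ne_gam {F : Finset (ℕ × ℕ)} (hF : IsFerrersGrid F) {i j : ℕ}
    (hj1 : 1 ≤ j) (hj2 : j < lam F 0) : rho F i ≠ gam F j := by
  by_cases hij : (i, j) ∈ F
  · exact ne_of_lt (rho_lt_gam_of_mem hF hj1 hij)
  · exact (ne_of_lt (gam_lt_rho_of_not_mem hF hj2 hij)).symm


/-- points of the tableau that will become left arrows -/
noncomputable def Lpre (P : Finset (ℕ × ℕ)) : Finset (ℕ × ℕ) :=
  P.filter (fun p => 1 ≤ p.2 ∧ ∃ i' < p.1, (i', p.2) ∈ P)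

/-- points of the tableau that will become up arrows -/
noncomputable def Upre (P : Finset (ℕ × ℕ)) : Finset (ℕ × ℕ) :=
  P.filter (fun p => 1 ≤ p.2 ∧ ∀ i' < p.1, (i', p.2) ∉ P)

/-- the relabelling map -/
noncomputable def phi (F : Finset (ℕ × ℕ)) (p : ℕ × ℕ) : ℕ × ℕ :=
  (rho F p.1, gam F p.2)

/-- the bijection -/
noncomputable def fMap (T : Finset (ℕ × ℕ) × Finset (ℕ × ℕ)) :
    Finset ℕ × Finset (ℕ × ℕ) × Finset (ℕ × ℕ) :=
  ((Finset.Ico 1 (lam T.1 0)).image (gam T.1),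
   ((Lpre T.2).image (phi T.1), (Upre T.2).image (phi T.1)))

section Tableau

variable {n : ℕ} {F P : Finset (ℕ × ℕ)}

lemma fst_lt_hgt (hF : IsFerrersGrid F) {p : ℕ × ℕ} (hp : p ∈ F) :
    p.1 < hgt F 0 := by
  have : (p.1, 0) ∈ F := hF p hp p.1 0 le_rfl (Nat.zero_le _)
  exact (mem_iff_lt_hgt hF _ _).1 this

lemma snd_lt_lam0 (hF : IsFerrersGrid F) {p : ℕ × ℕ} (hp : p ∈ F) :
    p.2 < lam F 0 := by
  have : (0, p.2) ∈ F := hF p hp 0 p.2 (Nat.zero_le _) le_rfl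
  exact (mem_iff_lt_lam hF _ _).1 this

lemma gam_injOn (hF : IsFerrersGrid F) {j j' : ℕ}
    (hj : j ∈ Finset.Ico 1 (lam F 0)) (hj' : j' ∈ Finset.Ico 1 (lam F 0))
    (h : gam F j = gam F j') : j = j' := by
  simp only [Finset.mem_Ico] at hj hj'
  rcases Nat.lt_trichotomy j j' with hlt | heq | hlt
  · exact absurd h (ne_of_gt (gam_lt hF hlt hj.2))
  · exact heq
  · exact absurd h (ne_of_lt (gam_lt hF hlt hj'.2))

lemma phi_injOn (hF : IsFerrersGrid F) {p q : ℕ × ℕ} (hp : p ∈ F) (hq : q ∈ F)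
    (hp2 : 1 ≤ p.2) (hq2 : 1 ≤ q.2) (h : phi F p = phi F q) : p = q := by
  unfold phi at h
  have h1 : p.1 = q.1 := (rho_strictMono hF).injective (congrArg Prod.fst h)
  have h2 : p.2 = q.2 := by
    refine gam_injOn hF ?_ ?_ (congrArg Prod.snd h) <;>
      simp only [Finset.mem_Ico]
    · exact ⟨hp2, snd_lt_lam0 hF hp⟩
    · exact ⟨hq2, snd_lt_lam0 hF hq⟩
  exact Prod.ext h1 h2

variable (hF : IsFerrersGrid F) (hPF : P ⊆ F) (hroot : (0, 0) ∈ P)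
  (hxor : ∀ p ∈ P, p ≠ (0, 0) →
    Xor' (∃ i < p.1, (i, p.2) ∈ P) (∃ j < p.2, (p.1, j) ∈ P))
  (hrowc : ∀ p ∈ F, ∃ q ∈ P, q.1 = p.1) (hcolc : ∀ p ∈ F, ∃ q ∈ P, q.2 = p.2)

include hF hPF hroot hxor hrowc hcolc

/-- each nonempty column has a unique topmost point; counting gives the
half-perimeter formula -/
lemma perimeter (hcard : P.card = n) : hgt F 0 + lam F 0 = n + 1 := by
  classical
  set A := P.filter (fun p => ∀ i' < p.1, (i', p.2) ∉ P) with hA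
  set B := P.filter (fun p => ∀ j' < p.2, (p.1, j') ∉ P) with hB
  have hUn : A ∪ B = P := by
    apply Finset.Subset.antisymm
    · intro p hp
      rcases Finset.mem_union.mp hp with h | h
      · exact (Finset.mem_filter.mp h).1
      · exact (Finset.mem_filter.mp h).1
    · intro p hp
      by_cases hpr : p = (0, 0)
      · subst hpr
        apply Finset.mem_union_left
        rw [hA, Finset.mem_filter]
        exact ⟨hp, by intro i' hi' _; omega⟩
      · rcases hxor p hp hpr with ⟨_, hnb⟩ | ⟨_, hna⟩
        · push_neg at hnb
          exact Finset.mem_union_right _ (Finset.mem_filter.mpr ⟨hp, hnb⟩)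
        · push_neg at hna
          exact Finset.mem_union_left _ (Finset.mem_filter.mpr ⟨hp, hna⟩)
  have hInt : A ∩ B = {(0, 0)} := by
    apply Finset.Subset.antisymm
    · intro p hp
      rw [Finset.mem_inter, hA, hB, Finset.mem_filter, Finset.mem_filter] at hp
      obtain ⟨⟨hpP, ha⟩, ⟨_, hb⟩⟩ := hp
      rw [Finset.mem_singleton]
      by_contra hpr
      rcases hxor p hpP hpr with ⟨⟨i', hi', hm⟩, _⟩ | ⟨⟨j', hj', hm⟩, _⟩
      · exact ha i' hi' hm
      · exact hb j' hj' hm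
    · intro p hp
      rw [Finset.mem_singleton] at hp
      subst hp
      rw [Finset.mem_inter, hA, hB, Finset.mem_filter, Finset.mem_filter]
      exact ⟨⟨hroot, by intro i' hi' _; omega⟩, ⟨hroot, by intro j' hj' _; omega⟩⟩
  have hAcard : A.card = lam F 0 := by
    rw [show lam F 0 = (Finset.range (lam F 0)).card by simp]
    apply Finset.card_bij (fun p _ => p.2)
    · intro p hp
      rw [hA, Finset.mem_filter] at hp
      exact Finset.mem_range.mpr (snd_lt_lam0 hF (hPF hp.1))
    · intro p hp q hq hpq
      rw [hA, Finset.mem_filter] at hp hq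
      rcases Nat.lt_trichotomy p.1 q.1 with hlt | heq | hlt
      · exact absurd (hpq ▸ hp.1) (hq.2 p.1 hlt)
      · exact Prod.ext heq hpq
      · exact absurd (hpq ▸ hq.1) (hp.2 q.1 hlt)
    · intro j hj
      rw [Finset.mem_range] at hj
      have hjF : (0, j) ∈ F := (mem_iff_lt_lam hF _ _).2 hj
      obtain ⟨q, hqP, hq2⟩ := hcolc _ hjF
      set S := (P.filter (fun p => p.2 = j)).image Prod.fst with hS
      have hne : S.Nonempty := ⟨q.1, Finset.mem_image.mpr ⟨q, Finset.mem_filter.mpr ⟨hqP, hq2⟩, rfl⟩⟩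
      set i0 := S.min' hne with hi0
      have hi0S : i0 ∈ S := Finset.min'_mem _ _
      rw [hS, Finset.mem_image] at hi0S
      obtain ⟨p, hpm, hp1⟩ := hi0S
      rw [Finset.mem_filter] at hpm
      have hpij : p = (i0, j) := Prod.ext hp1 hpm.2
      have hmemA : (i0, j) ∈ A := by
        rw [hA, Finset.mem_filter]
        refine ⟨hpij ▸ hpm.1, ?_⟩
        intro i' hi' hi'P
        have : i' ∈ S := Finset.mem_image.mpr ⟨(i', j), Finset.mem_filter.mpr ⟨hi'P, rfl⟩, rfl⟩
        have := Finset.min'_le _ _ this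
        omega
      exact ⟨(i0, j), hmemA, rfl⟩
  have hBcard : B.card = hgt F 0 := by
    rw [show hgt F 0 = (Finset.range (hgt F 0)).card by simp]
    apply Finset.card_bij (fun p _ => p.1)
    · intro p hp
      rw [hB, Finset.mem_filter] at hp
      exact Finset.mem_range.mpr (fst_lt_hgt hF (hPF hp.1))
    · intro p hp q hq hpq
      rw [hB, Finset.mem_filter] at hp hq
      rcases Nat.lt_trichotomy p.2 q.2 with hlt | heq | hlt
      · exact absurd (hpq ▸ hp.1) (hq.2 p.2 hlt)
      · exact Prod.ext hpq heq
      · exact absurd (hpq ▸ hq.1) (hp.2 q.2 hlt)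
    · intro i hi
      rw [Finset.mem_range] at hi
      have hiF : (i, 0) ∈ F := (mem_iff_lt_hgt hF _ _).2 hi
      obtain ⟨q, hqP, hq1⟩ := hrowc _ hiF
      set S := (P.filter (fun p => p.1 = i)).image Prod.snd with hS
      have hne : S.Nonempty := ⟨q.2, Finset.mem_image.mpr ⟨q, Finset.mem_filter.mpr ⟨hqP, hq1⟩, rfl⟩⟩
      set j0 := S.min' hne with hj0
      have hj0S : j0 ∈ S := Finset.min'_mem _ _
      rw [hS, Finset.mem_image] at hj0S
      obtain ⟨p, hpm, hp2⟩ := hj0S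
      rw [Finset.mem_filter] at hpm
      have hpij : p = (i, j0) := Prod.ext hpm.2 hp2
      have hmemB : (i, j0) ∈ B := by
        rw [hB, Finset.mem_filter]
        refine ⟨hpij ▸ hpm.1, ?_⟩
        intro j' hj' hj'P
        have : j' ∈ S := Finset.mem_image.mpr ⟨(i, j'), Finset.mem_filter.mpr ⟨hj'P, rfl⟩, rfl⟩
        have := Finset.min'_le _ _ this
        omega
      exact ⟨(i, j0), hmemB, rfl⟩
  have := Finset.card_union_add_card_inter A B
  rw [hUn, hInt, hcard, hAcard, hBcard] at this
  simp at this
  omega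

/-- a left-arrow point has nothing to its left -/
lemma Lpre_no_left {p : ℕ × ℕ} (hp : p ∈ Lpre P) : ∀ j' < p.2, (p.1, j') ∉ P := by
  rw [Lpre, Finset.mem_filter] at hp
  obtain ⟨hpP, hp2, habove⟩ := hp
  have hpr : p ≠ (0, 0) := by
    intro h; rw [h] at hp2; omega
  rcases hxor p hpP hpr with ⟨_, hnb⟩ | ⟨hb, hna⟩
  · push_neg at hnb; exact hnb
  · exact absurd habove hna

/-- an up-arrow point has something to its left -/
lemma Upre_has_left {p : ℕ × ℕ} (hp : p ∈ Upre P) : ∃ j' < p.2, (p.1, j') ∈ P := by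
  rw [Upre, Finset.mem_filter] at hp
  obtain ⟨hpP, hp2, htop⟩ := hp
  have hpr : p ≠ (0, 0) := by
    intro h; rw [h] at hp2; omega
  rcases hxor p hpP hpr with ⟨⟨i', hi', hm⟩, _⟩ | ⟨hb, _⟩
  · exact absurd hm (htop i' hi')
  · exact hb

/-- characterization of rows with no left arrow -/
lemma no_left_arrow_iff {i : ℕ} (hi : i < hgt F 0) :
    (∀ p ∈ Lpre P, p.1 ≠ i) ↔ (i = 0 ∨ (i, 0) ∈ P) := by
  constructor
  · intro h
    by_cases hi0 : i = 0
    · exact Or.inl hi0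
    · right
      by_contra hc
      have hiF : (i, 0) ∈ F := (mem_iff_lt_hgt hF _ _).2 hi
      obtain ⟨q, hqP, hq1⟩ := hrowc _ hiF
      set S := (P.filter (fun p => p.1 = i)).image Prod.snd with hS
      have hne : S.Nonempty := ⟨q.2, Finset.mem_image.mpr ⟨q, Finset.mem_filter.mpr ⟨hqP, hq1⟩, rfl⟩⟩
      set j0 := S.min' hne with hj0
      have hj0S : j0 ∈ S := Finset.min'_mem _ _
      rw [hS, Finset.mem_image] at hj0S
      obtain ⟨p, hpm, hp2⟩ := hj0S
      rw [Finset.mem_filter] at hpm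
      have hpij : p = (i, j0) := Prod.ext hpm.2 hp2
      have hj0P : (i, j0) ∈ P := hpij ▸ hpm.1
      have hj01 : 1 ≤ j0 := by
        rcases Nat.eq_zero_or_pos j0 with h0 | h0
        · exact absurd (h0 ▸ hj0P) hc
        · exact h0
      have hnl : ∀ j' < j0, (i, j') ∉ P := by
        intro j' hj' hj'P
        have : j' ∈ S := Finset.mem_image.mpr ⟨(i, j'), Finset.mem_filter.mpr ⟨hj'P, rfl⟩, rfl⟩
        have := Finset.min'_le _ _ this
        omega
      have hpr : (i, j0) ≠ (0, 0) := by
        intro hcc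
        have := congrArg Prod.fst hcc
        simp at this; omega
      rcases hxor _ hj0P hpr with ⟨ha, _⟩ | ⟨⟨j', hj', hm⟩, _⟩
      · -- has a point above: it is a left-arrow point
        have : (i, j0) ∈ Lpre P := by
          rw [Lpre, Finset.mem_filter]
          exact ⟨hj0P, hj01, ha⟩
        exact h _ this rfl
      · exact hnl j' hj' hm
  · intro h p hp hpi
    rcases h with h0 | hP0
    · rw [Lpre, Finset.mem_filter] at hp
      obtain ⟨_, _, i', hi', _⟩ := hp
      omega
    · have h2 : 0 < p.2 := by rw [Lpre, Finset.mem_filter] at hp; omega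
      exact Lpre_no_left hF hPF hroot hxor hrowc hcolc hp 0 h2 (by rw [hpi]; exact hP0)


lemma lam_pos (hi : i < hgt F 0) : 1 ≤ lam F i := by
  have : (i, 0) ∈ F := (mem_iff_lt_hgt hF _ _).2 hi
  have := (mem_iff_lt_lam hF _ _).1 this
  omega

lemma hgt_pos (hj : j < lam F 0) : 1 ≤ hgt F j := by
  have : (0, j) ∈ F := (mem_iff_lt_lam hF _ _).2 hj
  have := (mem_iff_lt_hgt hF _ _).1 this
  omega

lemma exists_colTop (hj : j < lam F 0) :
    ∃ i0, (i0, j) ∈ P ∧ ∀ i' < i0, (i', j) ∉ P := by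
  have hjF : (0, j) ∈ F := (mem_iff_lt_lam hF _ _).2 hj
  obtain ⟨q, hqP, hq2⟩ := hcolc _ hjF
  set S := (P.filter (fun p => p.2 = j)).image Prod.fst with hS
  have hne : S.Nonempty := ⟨q.1, Finset.mem_image.mpr ⟨q, Finset.mem_filter.mpr ⟨hqP, hq2⟩, rfl⟩⟩
  refine ⟨S.min' hne, ?_, ?_⟩
  · obtain ⟨p, hpm, hp1⟩ := Finset.mem_image.mp
      (show S.min' hne ∈ (P.filter (fun p => p.2 = j)).image Prod.fst from Finset.min'_mem _ _)
    rw [Finset.mem_filter] at hpm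
    have hpe : p = (S.min' hne, j) := Prod.ext hp1 hpm.2
    rw [hpe] at hpm
    exact hpm.1
  · intro i' hi' hi'P
    have : i' ∈ S := Finset.mem_image.mpr ⟨(i', j), Finset.mem_filter.mpr ⟨hi'P, rfl⟩, rfl⟩
    have := Finset.min'_le _ _ this
    omega

lemma exists_rowLeft (hi : i < hgt F 0) :
    ∃ j0, (i, j0) ∈ P ∧ ∀ j' < j0, (i, j') ∉ P := by
  have hiF : (i, 0) ∈ F := (mem_iff_lt_hgt hF _ _).2 hi
  obtain ⟨q, hqP, hq1⟩ := hrowc _ hiF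
  set S := (P.filter (fun p => p.1 = i)).image Prod.snd with hS
  have hne : S.Nonempty := ⟨q.2, Finset.mem_image.mpr ⟨q, Finset.mem_filter.mpr ⟨hqP, hq1⟩, rfl⟩⟩
  refine ⟨S.min' hne, ?_, ?_⟩
  · obtain ⟨p, hpm, hp2⟩ := Finset.mem_image.mp
      (show S.min' hne ∈ (P.filter (fun p => p.1 = i)).image Prod.snd from Finset.min'_mem _ _)
    rw [Finset.mem_filter] at hpm
    have hpe : p = (i, S.min' hne) := Prod.ext hpm.2 hp2
    rw [hpe] at hpm
    exact hpm.1
  · intro j' hj' hj'P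
    have : j' ∈ S := Finset.mem_image.mpr ⟨(i, j'), Finset.mem_filter.mpr ⟨hj'P, rfl⟩, rfl⟩
    have := Finset.min'_le _ _ this
    omega

lemma rho_mem (hcard : P.card = n) (hi : i < hgt F 0) :
    rho F i ∈ Finset.Icc 1 n := by
  have hper := perimeter hF hPF hroot hxor hrowc hcolc hcard
  have h1 := lam_pos hF hPF hroot hxor hrowc hcolc (i := i) hi
  have h2 : lam F i ≤ lam F 0 := lam_anti hF (Nat.zero_le i)
  rw [Finset.mem_Icc]
  unfold rho
  omega

lemma gam_mem (hcard : P.card = n) (hj : j ∈ Finset.Ico 1 (lam F 0)) :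
    gam F j ∈ Finset.Icc 2 n := by
  have hper := perimeter hF hPF hroot hxor hrowc hcolc hcard
  rw [Finset.mem_Ico] at hj
  have h1 := hgt_pos hF hPF hroot hxor hrowc hcolc (j := j) hj.2
  have h2 : hgt F j ≤ hgt F 0 := hgt_anti hF (Nat.zero_le j)
  rw [Finset.mem_Icc]
  unfold gam
  omega

lemma labels_partition (hcard : P.card = n) :
    (Finset.range (hgt F 0)).image (rho F) =
      Finset.Icc 1 n \ (Finset.Ico 1 (lam F 0)).image (gam F) := by
  have hper := perimeter hF hPF hroot hxor hrowc hcolc hcard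
  set RS := (Finset.range (hgt F 0)).image (rho F) with hRS
  set CS := (Finset.Ico 1 (lam F 0)).image (gam F) with hCS
  have hdisj : Disjoint RS CS := by
    rw [Finset.disjoint_left]
    intro a haR haC
    rw [hRS, Finset.mem_image] at haR
    rw [hCS, Finset.mem_image] at haC
    obtain ⟨i, hi, hia⟩ := haR
    obtain ⟨j, hj, hja⟩ := haC
    rw [Finset.mem_Ico] at hj
    exact rho_ne_gam hF hj.1 hj.2 (hia.trans hja.symm)
  have hRcard : RS.card = hgt F 0 := by
    rw [hRS, Finset.card_image_of_injective _ (rho_strictMono hF).injective,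
      Finset.card_range]
  have hCcard : CS.card = lam F 0 - 1 := by
    rw [hCS, Finset.card_image_of_injOn, Nat.card_Ico]
    intro a ha b hb hab
    exact gam_injOn hF ha hb hab
  have hsub : RS ∪ CS ⊆ Finset.Icc 1 n := by
    intro a ha
    rcases Finset.mem_union.mp ha with h | h
    · rw [hRS, Finset.mem_image] at h
      obtain ⟨i, hi, hia⟩ := h
      exact hia ▸ rho_mem hF hPF hroot hxor hrowc hcolc hcard (Finset.mem_range.mp hi)
    · rw [hCS, Finset.mem_image] at h
      obtain ⟨j, hj, hja⟩ := h
      have := hja ▸ gam_mem hF hPF hroot hxor hrowc hcolc hcard hj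
      rw [Finset.mem_Icc] at this ⊢
      omega
  have hCn1 : 1 ≤ lam F 0 := by
    have : (0, 0) ∈ F := hPF hroot
    have := (mem_iff_lt_lam hF _ _).1 this
    omega
  have huc : (RS ∪ CS).card = n := by
    rw [Finset.card_union_of_disjoint hdisj, hRcard, hCcard]
    omega
  have hun : RS ∪ CS = Finset.Icc 1 n := by
    apply Finset.eq_of_subset_of_card_le hsub
    rw [huc, Nat.card_Icc]
    omega
  apply Finset.Subset.antisymm
  · intro a ha
    rw [Finset.mem_sdiff]
    refine ⟨hun ▸ Finset.mem_union_left _ ha, ?_⟩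
    exact fun hc => Finset.disjoint_left.mp hdisj ha hc
  · intro a ha
    rw [Finset.mem_sdiff, ← hun, Finset.mem_union] at ha
    tauto

lemma fmap_mem_ATstar (hcard : P.card = n) : fMap (F, P) ∈ ATstar n := by
  have hper := perimeter hF hPF hroot hxor hrowc hcolc hcard
  set C := (Finset.Ico 1 (lam F 0)).image (gam F) with hC
  set L := (Lpre P).image (phi F) with hL
  set U := (Upre P).image (phi F) with hU
  have hfe : fMap (F, P) = (C, L, U) := rfl
  have hLpreP : Lpre P ⊆ P := Finset.filter_subset _ _
  have hUpreP : Upre P ⊆ P := Finset.filter_subset _ _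
  -- basic facts about elements of L ∪ U
  have harrow : ∀ p ∈ L ∪ U, ∃ q ∈ P, 1 ≤ q.2 ∧ p = phi F q := by
    intro p hp
    rcases Finset.mem_union.mp hp with h | h
    · rw [hL, Finset.mem_image] at h
      obtain ⟨q, hq, hqp⟩ := h
      rw [Lpre, Finset.mem_filter] at hq
      exact ⟨q, hq.1, hq.2.1, hqp.symm⟩
    · rw [hU, Finset.mem_image] at h
      obtain ⟨q, hq, hqp⟩ := h
      rw [Upre, Finset.mem_filter] at hq
      exact ⟨q, hq.1, hq.2.1, hqp.symm⟩
  have hq2mem : ∀ q ∈ P, 1 ≤ q.2 → q.2 ∈ Finset.Ico 1 (lam F 0) := by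
    intro q hq h1
    rw [Finset.mem_Ico]
    exact ⟨h1, snd_lt_lam0 hF (hPF hq)⟩
  have hATset : fMap (F, P) ∈ ATset n := by
    rw [hfe, ATset, Finset.mem_filter]
    dsimp only
    constructor
    · -- powerset membership
      rw [Finset.mem_product]
      constructor
      · rw [Finset.mem_powerset]
        intro c hc
        rw [hC] at hc
        rw [Finset.mem_image] at hc
        obtain ⟨j, hj, hjc⟩ := hc
        have := hjc ▸ gam_mem hF hPF hroot hxor hrowc hcolc hcard hj
        rw [Finset.mem_Icc] at this ⊢
        omega
      · rw [Finset.mem_product]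
        constructor <;> rw [Finset.mem_powerset] <;> intro p hp
        · have hp' : p ∈ L ∪ U := Finset.mem_union_left _ hp
          obtain ⟨q, hqP, hq2, hqp⟩ := harrow p hp'
          rw [Finset.mem_product, hqp]
          simp only [phi]
          constructor
          · exact rho_mem hF hPF hroot hxor hrowc hcolc hcard (fst_lt_hgt hF (hPF hqP))
          · have := gam_mem hF hPF hroot hxor hrowc hcolc hcard (hq2mem q hqP hq2)
            rw [Finset.mem_Icc] at this ⊢
            omega
        · have hp' : p ∈ L ∪ U := Finset.mem_union_right _ hp
          obtain ⟨q, hqP, hq2, hqp⟩ := harrow p hp'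
          rw [Finset.mem_product, hqp]
          simp only [phi]
          constructor
          · exact rho_mem hF hPF hroot hxor hrowc hcolc hcard (fst_lt_hgt hF (hPF hqP))
          · have := gam_mem hF hPF hroot hxor hrowc hcolc hcard (hq2mem q hqP hq2)
            rw [Finset.mem_Icc] at this ⊢
            omega
    · -- IsAT
      refine ⟨?_, ?_, ?_, ?_, ?_⟩
      · intro c hc
        rw [hC, Finset.mem_image] at hc
        obtain ⟨j, hj, hjc⟩ := hc
        have := hjc ▸ gam_mem hF hPF hroot hxor hrowc hcolc hcard hj
        rw [Finset.mem_Icc] at this ⊢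
        omega
      · rw [Finset.disjoint_left]
        intro p hpL hpU
        rw [hL, Finset.mem_image] at hpL
        rw [hU, Finset.mem_image] at hpU
        obtain ⟨q, hq, hqp⟩ := hpL
        obtain ⟨q', hq', hq'p⟩ := hpU
        have hqeq : q = q' := by
          apply phi_injOn hF (hPF (hLpreP hq)) (hPF (hUpreP hq'))
          · exact (Finset.mem_filter.mp hq).2.1
          · exact (Finset.mem_filter.mp hq').2.1
          · rw [hqp, hq'p]
        rw [Lpre, Finset.mem_filter] at hq
        rw [Upre, Finset.mem_filter] at hq'
        obtain ⟨_, _, i', hi', hm⟩ := hq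
        exact (hqeq ▸ hq'.2.2) i' hi' hm
      · intro p hp
        obtain ⟨q, hqP, hq2, hqp⟩ := harrow p hp
        have hq2' := hq2mem q hqP hq2
        refine ⟨?_, ?_, ?_, ?_⟩
        · rw [hqp]
          exact rho_mem hF hPF hroot hxor hrowc hcolc hcard (fst_lt_hgt hF (hPF hqP))
        · rw [hqp]
          intro hc
          rw [hC, Finset.mem_image] at hc
          obtain ⟨j, hj, hjc⟩ := hc
          rw [Finset.mem_Ico] at hj
          exact rho_ne_gam hF hj.1 hj.2 hjc.symm
        · rw [hqp, hC]
          exact Finset.mem_image.mpr ⟨q.2, hq2', rfl⟩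
        · rw [hqp]
          exact rho_lt_gam_of_mem hF hq2 (by rw [show (q.1, q.2) = q from rfl]; exact hPF hqP)
      · intro p hpL c' hc' hmem
        rw [hL, Finset.mem_image] at hpL
        obtain ⟨q, hq, hqp⟩ := hpL
        obtain ⟨q', hq'P, hq'2, hq'eq⟩ := harrow _ hmem
        have h1 : rho F q'.1 = rho F q.1 := by
          have e1 := congrArg Prod.fst hq'eq
          simp only [phi] at e1
          have e3 := congrArg Prod.fst hqp
          simp only [phi] at e3
          omega
        have hq1 : q'.1 = q.1 := (rho_strictMono hF).injective h1
        have h2 : gam F q.2 < gam F q'.2 := by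
          have e2 := congrArg Prod.snd hq'eq
          simp only [phi] at e2
          have e3 := congrArg Prod.snd hqp
          simp only [phi] at e3
          omega
        have hq2 : (Finset.mem_filter.mp hq).2.1 = (Finset.mem_filter.mp hq).2.1 := rfl
        have hqP := hLpreP hq
        have hql : 1 ≤ q.2 := (Finset.mem_filter.mp hq).2.1
        have hlt : q'.2 < q.2 := by
          rcases Nat.lt_trichotomy q'.2 q.2 with h | h | h
          · exact h
          · rw [h] at h2; omega
          · have := gam_lt hF h (snd_lt_lam0 hF (hPF hqP))
            omega
        have := Lpre_no_left hF hPF hroot hxor hrowc hcolc hq q'.2 hlt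
        rw [← hq1] at this
        exact this (by rw [show (q'.1, q'.2) = q' from rfl]; exact hq'P)
      · intro p hpU r' hr' hmem
        rw [hU, Finset.mem_image] at hpU
        obtain ⟨q, hq, hqp⟩ := hpU
        obtain ⟨q', hq'P, hq'2, hq'eq⟩ := harrow _ hmem
        have h2 : gam F q'.2 = gam F q.2 := by
          have e2 := congrArg Prod.snd hq'eq
          simp only [phi] at e2
          have e3 := congrArg Prod.snd hqp
          simp only [phi] at e3
          omega
        have hqsnd : q'.2 = q.2 := by
          apply gam_injOn hF (hq2mem q' hq'P hq'2)
            (hq2mem q (hUpreP hq) (Finset.mem_filter.mp hq).2.1) h2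
        have h1 : rho F q'.1 < rho F q.1 := by
          have e1 := congrArg Prod.fst hq'eq
          simp only [phi] at e1
          have e3 := congrArg Prod.fst hqp
          simp only [phi] at e3
          omega
        have hq1 : q'.1 < q.1 := by
          by_contra hc
          push_neg at hc
          have := (rho_strictMono hF).monotone hc
          omega
        rw [Upre, Finset.mem_filter] at hq
        exact hq.2.2 q'.1 hq1 (by rw [← hqsnd, show (q'.1, q'.2) = q' from rfl]; exact hq'P)
  rw [ATstar, Finset.mem_filter, hfe]
  rw [hfe] at hATset
  refine ⟨hATset, ?_⟩
  dsimp only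
  intro c hc
  rw [hC, Finset.mem_image] at hc
  obtain ⟨j, hj, hjc⟩ := hc
  rw [Finset.mem_Ico] at hj
  obtain ⟨i0, hi0P, hi0top⟩ := exists_colTop hF hPF hroot hxor hrowc hcolc hj.2
  refine ⟨phi F (i0, j), ?_, ?_⟩
  · rw [hU]
    apply Finset.mem_image.mpr
    refine ⟨(i0, j), ?_, rfl⟩
    rw [Upre, Finset.mem_filter]
    exact ⟨hi0P, hj.1, hi0top⟩
  · rw [phi]
    exact hjc

lemma LU_union :
    (Lpre P).image (phi F) ∪ (Upre P).image (phi F) =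
      (P.filter (fun p => 1 ≤ p.2)).image (phi F) := by
  rw [← Finset.image_union]
  congr 1
  ext p
  simp only [Lpre, Upre, Finset.mem_union, Finset.mem_filter]
  constructor
  · rintro (⟨h1, h2, _⟩ | ⟨h1, h2, _⟩) <;> exact ⟨h1, h2⟩
  · rintro ⟨h1, h2⟩
    by_cases hc : ∃ i' < p.1, (i', p.2) ∈ P
    · exact Or.inl ⟨h1, h2, hc⟩
    · push_neg at hc
      exact Or.inr ⟨h1, h2, hc⟩

lemma phi_mem_LU_iff {q : ℕ × ℕ} (hqF : q ∈ F) (hq2 : 1 ≤ q.2) :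
    phi F q ∈ (Lpre P).image (phi F) ∪ (Upre P).image (phi F) ↔ q ∈ P := by
  rw [LU_union hF hPF hroot hxor hrowc hcolc]
  constructor
  · intro h
    rw [Finset.mem_image] at h
    obtain ⟨q', hq', hq'eq⟩ := h
    rw [Finset.mem_filter] at hq'
    have : q' = q := phi_injOn hF (hPF hq'.1) hqF hq'.2 hq2 hq'eq
    exact this ▸ hq'.1
  · intro h
    exact Finset.mem_image.mpr ⟨q, Finset.mem_filter.mpr ⟨h, hq2⟩, rfl⟩

lemma top_row_eq_one (hcard : P.card = n) :
    topRowA n ((Finset.Ico 1 (lam F 0)).image (gam F)) = 1 := by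
  have hpart := labels_partition hF hPF hroot hxor hrowc hcolc hcard
  have hR1 : 1 ≤ hgt F 0 := by
    have := fst_lt_hgt hF (hPF hroot); omega
  have h1mem : (1 : ℕ) ∈ Finset.Icc 1 n \ (Finset.Ico 1 (lam F 0)).image (gam F) := by
    rw [← hpart, Finset.mem_image]
    refine ⟨0, Finset.mem_range.mpr hR1, ?_⟩
    unfold rho
    omega
  unfold topRowA
  have hmin : (Finset.Icc 1 n \ (Finset.Ico 1 (lam F 0)).image (gam F)).min = (1 : ℕ) := by
    apply le_antisymm
    · exact Finset.min_le h1mem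
    · exact Finset.le_min fun b hb => by
        rw [Finset.mem_sdiff, Finset.mem_Icc] at hb
        exact WithTop.coe_le_coe.mpr hb.1.1
  rw [hmin]
  rfl

lemma topA_eq (hcard : P.card = n) :
    topA n ((Finset.Ico 1 (lam F 0)).image (gam F))
      ((Lpre P).image (phi F)) ((Upre P).image (phi F)) = topT P := by
  unfold topA
  rw [top_row_eq_one hF hPF hroot hxor hrowc hcolc hcard,
    LU_union hF hPF hroot hxor hrowc hcolc, Finset.filter_image]
  rw [Finset.card_image_of_injOn, topT]
  · rw [Finset.filter_filter]
    congr 1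
    apply Finset.filter_congr
    intro p hp
    simp only [phi]
    constructor
    · rintro ⟨h2, h1⟩
      have hi : p.1 = 0 := by
        by_contra hc
        have h3 : rho F 0 < rho F p.1 := (rho_strictMono hF) (by omega)
        have h0 : rho F 0 = 1 := by unfold rho; omega
        omega
      exact ⟨hi, by omega⟩
    · rintro ⟨hi, h2⟩
      refine ⟨by omega, ?_⟩
      rw [hi]; unfold rho; omega
  · intro p hp q hq hpq
    simp only [Finset.coe_filter, Set.mem_setOf_eq, Finset.mem_filter] at hp hq
    exact phi_injOn hF (hPF hp.1.1) (hPF hq.1.1) hp.1.2 hq.1.2 hpq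

lemma urrA_eq (hcard : P.card = n) :
    urrA n ((Finset.Ico 1 (lam F 0)).image (gam F)) ((Lpre P).image (phi F)) =
      leftT P + 1 := by
  have hpart := labels_partition hF hPF hroot hxor hrowc hcolc hcard
  have hR1 : 1 ≤ hgt F 0 := by
    have := fst_lt_hgt hF (hPF hroot); omega
  unfold urrA
  rw [← hpart, Finset.filter_image, Finset.card_image_of_injOn]
  swap
  · intro a _ b _ hab
    exact (rho_strictMono hF).injective hab
  have hcong : (Finset.range (hgt F 0)).filter
        (fun i => ∀ p ∈ (Lpre P).image (phi F), p.1 ≠ rho F i) =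
      (Finset.range (hgt F 0)).filter (fun i => i = 0 ∨ (i, 0) ∈ P) := by
    apply Finset.filter_congr
    intro i hi
    rw [Finset.mem_range] at hi
    have key : (∀ p ∈ (Lpre P).image (phi F), p.1 ≠ rho F i) ↔
        (∀ q ∈ Lpre P, q.1 ≠ i) := by
      constructor
      · intro h q hq hqi
        exact h (phi F q) (Finset.mem_image.mpr ⟨q, hq, rfl⟩)
          (by simp only [phi]; rw [hqi])
      · intro h p hp hpi
        rw [Finset.mem_image] at hp
        obtain ⟨q, hq, hqe⟩ := hp
        have : rho F q.1 = rho F i := by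
          rw [← hpi, ← hqe]; rfl
        exact h q hq ((rho_strictMono hF).injective this)
    rw [key]
    exact no_left_arrow_iff hF hPF hroot hxor hrowc hcolc hi
  rw [hcong]
  have hsplit : (Finset.range (hgt F 0)).filter (fun i => i = 0 ∨ (i, 0) ∈ P) =
      insert 0 ((Finset.range (hgt F 0)).filter (fun i => i ≠ 0 ∧ (i, 0) ∈ P)) := by
    ext i
    simp only [Finset.mem_insert, Finset.mem_filter, Finset.mem_range]
    constructor
    · rintro ⟨hir, h0 | hP0⟩
      · exact Or.inl h0
      · by_cases hi0 : i = 0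
        · exact Or.inl hi0
        · exact Or.inr ⟨hir, hi0, hP0⟩
    · rintro (h0 | ⟨hir, hi0, hP0⟩)
      · exact ⟨by omega, Or.inl h0⟩
      · exact ⟨hir, Or.inr hP0⟩
  rw [hsplit, Finset.card_insert_of_notMem (by simp)]
  have : ((Finset.range (hgt F 0)).filter (fun i => i ≠ 0 ∧ (i, 0) ∈ P)).card
      = leftT P := by
    unfold leftT
    apply Finset.card_bij (fun i _ => ((i, 0) : ℕ × ℕ))
    · intro i hi
      rw [Finset.mem_filter] at hi ⊢
      exact ⟨hi.2.2, rfl, hi.2.1⟩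
    · intro a ha b hb hab
      exact congrArg Prod.fst hab
    · intro p hp
      rw [Finset.mem_filter] at hp
      obtain ⟨hpP, hp2, hp1⟩ := hp
      refine ⟨p.1, ?_, ?_⟩
      · rw [Finset.mem_filter, Finset.mem_range]
        exact ⟨fst_lt_hgt hF (hPF hpP), hp1, (Prod.ext rfl hp2 : p = (p.1, 0)) ▸ hpP⟩
      · exact Prod.ext rfl hp2.symm
  omega

lemma corner_iff {i j : ℕ} :
    (i, j) ∈ cornersT F ↔ ((i, j) ∈ F ∧ hgt F j = i + 1 ∧ lam F i = j + 1) := by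
  rw [cornersT, Finset.mem_filter]
  dsimp only
  constructor
  · rintro ⟨hmem, h1, h2⟩
    refine ⟨hmem, ?_, ?_⟩
    · have a1 := (mem_iff_lt_hgt hF _ _).1 hmem
      have a2 := (mem_iff_lt_hgt hF (i + 1) j).not.1 h1
      omega
    · have a1 := (mem_iff_lt_lam hF _ _).1 hmem
      have a2 := (mem_iff_lt_lam hF i (j + 1)).not.1 h2
      omega
  · rintro ⟨hmem, h1, h2⟩
    refine ⟨hmem, ?_, ?_⟩
    · rw [mem_iff_lt_hgt hF]; omega
    · rw [mem_iff_lt_lam hF]; omega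

lemma corner_col0 {i : ℕ} (h : (i, 0) ∈ cornersT F) : (i, 0) ∈ P := by
  have h' := (corner_iff hF hPF hroot hxor hrowc hcolc).1 h
  obtain ⟨hmem, h1, h2⟩ := h'
  obtain ⟨q, hqP, hq1⟩ := hrowc _ hmem
  have hqF := hPF hqP
  have : q.2 < lam F q.1 := by
    rw [← mem_iff_lt_lam hF]
    exact hqF
  rw [hq1] at this
  simp only at this
  rw [h2] at this
  have hq : q = (i, 0) := Prod.ext hq1 (by omega)
  exact hq ▸ hqP

lemma corner_gam {i j : ℕ} (h : (i, j) ∈ cornersT F) (hj : 1 ≤ j) :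
    gam F j = rho F i + 1 := by
  obtain ⟨hmem, h1, h2⟩ := (corner_iff hF hPF hroot hxor hrowc hcolc).1 h
  have h3 : lam F i ≤ lam F 0 := lam_anti hF (Nat.zero_le i)
  unfold gam rho
  omega

lemma nocA_eq (hcard : P.card = n) :
    nocA n ((Finset.Ico 1 (lam F 0)).image (gam F)) ((Lpre P).image (phi F))
      ((Upre P).image (phi F)) = nocT F P := by
  have hpart := labels_partition hF hPF hroot hxor hrowc hcolc hcard
  unfold nocA nocT
  symm
  apply Finset.card_bij (fun p _ => gam F p.2)
  · -- membership
    rintro ⟨i, j⟩ hp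
    rw [Finset.mem_filter] at hp
    obtain ⟨hcor, hnP⟩ := hp
    have hj1 : 1 ≤ j := by
      rcases Nat.eq_zero_or_pos j with h0 | h0
      · subst h0
        exact absurd (corner_col0 hF hPF hroot hxor hrowc hcolc hcor) hnP
      · exact h0
    obtain ⟨hmem, h1, h2⟩ := (corner_iff hF hPF hroot hxor hrowc hcolc).1 hcor
    have hjI : j ∈ Finset.Ico 1 (lam F 0) := by
      rw [Finset.mem_Ico]
      have := snd_lt_lam0 hF hmem
      exact ⟨hj1, this⟩
    have hgr := corner_gam hF hPF hroot hxor hrowc hcolc hcor hj1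
    rw [Finset.mem_filter]
    refine ⟨Finset.mem_image.mpr ⟨j, hjI, rfl⟩, ?_, ?_⟩
    · rw [show gam F j - 1 = rho F i by omega, ← hpart]
      exact Finset.mem_image.mpr ⟨i, Finset.mem_range.mpr (fst_lt_hgt hF hmem), rfl⟩
    · rw [show gam F j - 1 = rho F i by omega]
      have : ((rho F i, gam F j) : ℕ × ℕ) = phi F (i, j) := rfl
      rw [this]
      rw [phi_mem_LU_iff hF hPF hroot hxor hrowc hcolc hmem hj1]
      exact hnP
  · -- injectivity
    rintro ⟨i, j⟩ hp ⟨i', j'⟩ hq he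
    rw [Finset.mem_filter] at hp hq
    obtain ⟨hcor, hnP⟩ := hp
    obtain ⟨hcor', hnP'⟩ := hq
    have hj1 : 1 ≤ j := by
      rcases Nat.eq_zero_or_pos j with h0 | h0
      · subst h0
        exact absurd (corner_col0 hF hPF hroot hxor hrowc hcolc hcor) hnP
      · exact h0
    have hj1' : 1 ≤ j' := by
      rcases Nat.eq_zero_or_pos j' with h0 | h0
      · subst h0
        exact absurd (corner_col0 hF hPF hroot hxor hrowc hcolc hcor') hnP'
      · exact h0
    obtain ⟨hmem, h1, h2⟩ := (corner_iff hF hPF hroot hxor hrowc hcolc).1 hcor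
    obtain ⟨hmem', h1', h2'⟩ := (corner_iff hF hPF hroot hxor hrowc hcolc).1 hcor'
    have hjj : j = j' := by
      apply gam_injOn hF _ _ he
      · rw [Finset.mem_Ico]; exact ⟨hj1, snd_lt_lam0 hF hmem⟩
      · rw [Finset.mem_Ico]; exact ⟨hj1', snd_lt_lam0 hF hmem'⟩
    subst hjj
    have : i = i' := by omega
    rw [this]
  · -- surjectivity
    intro c hc
    rw [Finset.mem_filter] at hc
    obtain ⟨hcC, hc1, hc2⟩ := hc
    obtain ⟨j, hjI, hjc⟩ := Finset.mem_image.mp hcC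
    rw [← hpart] at hc1
    obtain ⟨i, hi, hie⟩ := Finset.mem_image.mp hc1
    rw [Finset.mem_range] at hi
    rw [Finset.mem_Ico] at hjI
    have hgam2 : gam F j ∈ Finset.Icc 2 n :=
      gam_mem hF hPF hroot hxor hrowc hcolc hcard (Finset.mem_Ico.mpr hjI)
    rw [Finset.mem_Icc] at hgam2
    have hkey : gam F j = rho F i + 1 := by omega
    have hmem : (i, j) ∈ F := by
      by_contra hcc
      have := gam_lt_rho_of_not_mem hF hjI.2 hcc
      omega
    have hc1' : (i + 1, j) ∉ F := by
      intro hcc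
      have := rho_lt_gam_of_mem hF hjI.1 hcc
      have := rho_strictMono hF (show i < i + 1 by omega)
      omega
    have hc2' : (i, j + 1) ∉ F := by
      intro hcc
      have ha := rho_lt_gam_of_mem hF (show 1 ≤ j + 1 by omega) hcc
      have hb := gam_lt hF (show j < j + 1 by omega) hjI.2
      omega
    have hcor : (i, j) ∈ cornersT F := by
      rw [cornersT, Finset.mem_filter]
      exact ⟨hmem, hc1', hc2'⟩
    have hnP : (i, j) ∉ P := by
      intro hcc
      have := (phi_mem_LU_iff hF hPF hroot hxor hrowc hcolc hmem hjI.1).2 hcc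
      have hphi : phi F (i, j) = (c - 1, c) := by
        unfold phi
        dsimp only
        rw [hie, hjc]
      rw [hphi] at this
      exact hc2 this
    refine ⟨(i, j), Finset.mem_filter.mpr ⟨hcor, hnP⟩, ?_⟩
    exact hjc

lemma no_left_label_iff (i : ℕ) :
    (∀ p ∈ (Lpre P).image (phi F), p.1 ≠ rho F i) ↔ (∀ q ∈ Lpre P, q.1 ≠ i) := by
  constructor
  · intro h q hq hqi
    exact h (phi F q) (Finset.mem_image.mpr ⟨q, hq, rfl⟩)
      (by simp only [phi]; rw [hqi])
  · intro h p hp hpi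
    rw [Finset.mem_image] at hp
    obtain ⟨q, hq, hqe⟩ := hp
    have : rho F q.1 = rho F i := by rw [← hpi, ← hqe]; rfl
    exact h q hq ((rho_strictMono hF).injective this)

end Tableau

lemma strictMono_eq_of_image_eq {f g : ℕ → ℕ} (hf : StrictMono f) (hg : StrictMono g)
    {R : ℕ} (h : (Finset.range R).image f = (Finset.range R).image g) :
    ∀ i, i < R → f i = g i := by
  intro i
  induction i using Nat.strong_induction_on with
  | _ i IH =>
    intro hiR
    have h1 : f i ∈ (Finset.range R).image g :=
      h ▸ Finset.mem_image.mpr ⟨i, Finset.mem_range.mpr hiR, rfl⟩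
    obtain ⟨i', hi', he'⟩ := Finset.mem_image.mp h1
    rw [Finset.mem_range] at hi'
    have h2 : g i ∈ (Finset.range R).image f :=
      h.symm ▸ Finset.mem_image.mpr ⟨i, Finset.mem_range.mpr hiR, rfl⟩
    obtain ⟨i'', hi'', he''⟩ := Finset.mem_image.mp h2
    rw [Finset.mem_range] at hi''
    rcases Nat.lt_trichotomy i' i with hc | hc | hc
    · exfalso
      have e : f i' = f i := (IH i' hc hi').trans he'
      have := hf hc
      omega
    · rw [hc] at he'
      exact he'.symm
    · rcases Nat.lt_trichotomy i'' i with hd | hd | hd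
      · exfalso
        have e : g i'' = g i := (IH i'' hd hi'').symm.trans he''
        have := hg hd
        omega
      · rw [hd] at he''
        exact he''
      · exfalso
        have e1 : g i < g i' := hg hc
        have e2 : f i < f i'' := hf hd
        rw [he'] at e1
        rw [he''] at e2
        omega

lemma fmap_injective {n : ℕ} {F P F' P' : Finset (ℕ × ℕ)}
    (hF : IsFerrersGrid F) (hPF : P ⊆ F) (hroot : (0, 0) ∈ P)
    (hxor : ∀ p ∈ P, p ≠ (0, 0) →
      Xor' (∃ i < p.1, (i, p.2) ∈ P) (∃ j < p.2, (p.1, j) ∈ P))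
    (hrowc : ∀ p ∈ F, ∃ q ∈ P, q.1 = p.1) (hcolc : ∀ p ∈ F, ∃ q ∈ P, q.2 = p.2)
    (hcard : P.card = n)
    (hF' : IsFerrersGrid F') (hPF' : P' ⊆ F') (hroot' : (0, 0) ∈ P')
    (hxor' : ∀ p ∈ P', p ≠ (0, 0) →
      Xor' (∃ i < p.1, (i, p.2) ∈ P') (∃ j < p.2, (p.1, j) ∈ P'))
    (hrowc' : ∀ p ∈ F', ∃ q ∈ P', q.1 = p.1) (hcolc' : ∀ p ∈ F', ∃ q ∈ P', q.2 = p.2)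
    (hcard' : P'.card = n)
    (heq : fMap (F, P) = fMap (F', P')) : F = F' ∧ P = P' := by
  have hCe : (Finset.Ico 1 (lam F 0)).image (gam F) =
      (Finset.Ico 1 (lam F' 0)).image (gam F') := congrArg Prod.fst heq
  have hlam0 : 1 ≤ lam F 0 := by
    have := (mem_iff_lt_lam hF 0 0).1 (hPF hroot); omega
  have hlam0' : 1 ≤ lam F' 0 := by
    have := (mem_iff_lt_lam hF' 0 0).1 (hPF' hroot'); omega
  have hC1 : ((Finset.Ico 1 (lam F 0)).image (gam F)).card = lam F 0 - 1 := by
    rw [Finset.card_image_of_injOn (fun a ha b hb hab => gam_injOn hF ha hb hab),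
      Nat.card_Ico]
  have hC1' : ((Finset.Ico 1 (lam F' 0)).image (gam F')).card = lam F' 0 - 1 := by
    rw [Finset.card_image_of_injOn (fun a ha b hb hab => gam_injOn hF' ha hb hab),
      Nat.card_Ico]
  have hlam00 : lam F 0 = lam F' 0 := by
    rw [hCe] at hC1
    omega
  have hper := perimeter hF hPF hroot hxor hrowc hcolc hcard
  have hper' := perimeter hF' hPF' hroot' hxor' hrowc' hcolc' hcard'
  have hR : hgt F 0 = hgt F' 0 := by omega
  have hpart := labels_partition hF hPF hroot hxor hrowc hcolc hcard
  have hpart' := labels_partition hF' hPF' hroot' hxor' hrowc' hcolc' hcard'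
  have hrho : ∀ i, i < hgt F 0 → rho F i = rho F' i := by
    apply strictMono_eq_of_image_eq (rho_strictMono hF) (rho_strictMono hF')
    rw [hpart, hR, hpart', hCe]
  have hlam : ∀ i, lam F i = lam F' i := by
    intro i
    by_cases hi : i < hgt F 0
    · have h1 := hrho i hi
      have h2 : lam F i ≤ lam F 0 := lam_anti hF (Nat.zero_le i)
      have h3 : lam F' i ≤ lam F' 0 := lam_anti hF' (Nat.zero_le i)
      unfold rho at h1
      omega
    · push_neg at hi
      rw [lam_eq_zero hF hi, lam_eq_zero hF' (by omega)]
  have hFF : F = F' := by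
    ext ⟨i, j⟩
    rw [mem_iff_lt_lam hF, mem_iff_lt_lam hF', hlam i]
  subst hFF
  refine ⟨rfl, ?_⟩
  have hLe : (Lpre P).image (phi F) = (Lpre P').image (phi F) :=
    congrArg (fun z => z.2.1) heq
  have hUe : (Upre P).image (phi F) = (Upre P').image (phi F) :=
    congrArg (fun z => z.2.2) heq
  ext ⟨i, j⟩
  by_cases hj : 1 ≤ j
  · constructor
    · intro hmem
      have hFmem : (i, j) ∈ F := hPF hmem
      have h1 := (phi_mem_LU_iff hF hPF hroot hxor hrowc hcolc hFmem hj).2 hmem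
      rw [hLe, hUe] at h1
      exact (phi_mem_LU_iff hF hPF' hroot' hxor' hrowc' hcolc' hFmem hj).1 h1
    · intro hmem
      have hFmem : (i, j) ∈ F := hPF' hmem
      have h1 := (phi_mem_LU_iff hF hPF' hroot' hxor' hrowc' hcolc' hFmem hj).2 hmem
      rw [← hLe, ← hUe] at h1
      exact (phi_mem_LU_iff hF hPF hroot hxor hrowc hcolc hFmem hj).1 h1
  · have hj0 : j = 0 := by omega
    subst hj0
    by_cases hi0 : i = 0
    · subst hi0
      exact ⟨fun _ => hroot', fun _ => hroot⟩
    · by_cases hiR : i < hgt F 0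
      · have k1 := no_left_arrow_iff hF hPF hroot hxor hrowc hcolc hiR
        have k2 := no_left_arrow_iff hF hPF' hroot' hxor' hrowc' hcolc' hiR
        have k3 := no_left_label_iff hF hPF hroot hxor hrowc hcolc i
        have k4 := no_left_label_iff hF hPF' hroot' hxor' hrowc' hcolc' i
        rw [hLe] at k3
        constructor
        · intro hmem
          have := k2.1 (k4.1 (k3.2 (k1.2 (Or.inr hmem))))
          tauto
        · intro hmem
          have := k1.1 (k3.1 (k4.2 (k2.2 (Or.inr hmem))))
          tauto
      · constructor
        · intro hmem
          exact absurd (fst_lt_hgt hF (hPF hmem)) hiR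
        · intro hmem
          exact absurd (fst_lt_hgt hF (hPF' hmem)) hiR


/-! #### The inverse construction -/

lemma lam_eq {F : Finset (ℕ × ℕ)} (hF : IsFerrersGrid F) {i m : ℕ}
    (h : ∀ j, ((i, j) ∈ F ↔ j < m)) : lam F i = m := by
  have h1 := (mem_iff_lt_lam hF i (lam F i)).not.1
  have h2 := mem_iff_lt_lam hF i m
  have a1 : ¬ (lam F i < lam F i) := lt_irrefl _
  have a2 := (h (lam F i)).symm
  have a3 := (h m).symm
  by_cases hm : m < lam F i
  · have := h2.2 hm
    rw [h m] at this
    omega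
  · by_cases hm' : lam F i < m
    · have := (h (lam F i)).2 hm'
      rw [mem_iff_lt_lam hF] at this
      omega
    · omega

lemma hgt_eq {F : Finset (ℕ × ℕ)} (hF : IsFerrersGrid F) {j m : ℕ}
    (h : ∀ i, ((i, j) ∈ F ↔ i < m)) : hgt F j = m := by
  by_cases hm : m < hgt F j
  · have := (mem_iff_lt_hgt hF m j).2 hm
    rw [h m] at this
    omega
  · by_cases hm' : hgt F j < m
    · have := (h (hgt F j)).2 hm'
      rw [mem_iff_lt_hgt hF] at this
      omega
    · omega

/-- the row labels -/
noncomputable def rowsOf (n : ℕ) (C : Finset ℕ) : Finset ℕ := Finset.Icc 1 n \ C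

/-- row label to row index -/
noncomputable def rIdx (n : ℕ) (C : Finset ℕ) (r : ℕ) : ℕ :=
  ((rowsOf n C).filter (fun r' => r' < r)).card

/-- column label to column index -/
noncomputable def cIdx (C : Finset ℕ) (c : ℕ) : ℕ :=
  (C.filter (fun c' => c ≤ c')).card

/-- the inverse diagram -/
noncomputable def gF (n : ℕ) (C : Finset ℕ) : Finset (ℕ × ℕ) :=
  (((rowsOf n C) ×ˢ C).filter (fun p => p.1 < p.2)).image
      (fun p => (rIdx n C p.1, cIdx C p.2)) ∪
    (rowsOf n C).image (fun r => (rIdx n C r, 0))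

/-- the inverse point set -/
noncomputable def gP (n : ℕ) (C : Finset ℕ) (L U : Finset (ℕ × ℕ)) :
    Finset (ℕ × ℕ) :=
  ((L ∪ U).image (fun p => (rIdx n C p.1, cIdx C p.2))) ∪
    ((rowsOf n C).filter (fun r => ∀ p ∈ L, p.1 ≠ r)).image
      (fun r => (rIdx n C r, 0))

section Inverse

variable {n : ℕ} {C : Finset ℕ} {L U : Finset (ℕ × ℕ)}

lemma rIdx_lt_rIdx {r r' : ℕ} (hr : r ∈ rowsOf n C) (h : r < r') :
    rIdx n C r < rIdx n C r' := by
  apply Finset.card_lt_card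
  constructor
  · intro x hx
    rw [Finset.mem_filter] at hx ⊢
    exact ⟨hx.1, by omega⟩
  · intro hsub
    have : r ∈ (rowsOf n C).filter (fun r'' => r'' < r') :=
      Finset.mem_filter.mpr ⟨hr, h⟩
    have := hsub this
    rw [Finset.mem_filter] at this
    omega

lemma rIdx_mono {r r' : ℕ} (h : r ≤ r') : rIdx n C r ≤ rIdx n C r' :=
  Finset.card_le_card (fun x hx => by
    rw [Finset.mem_filter] at hx ⊢; exact ⟨hx.1, by omega⟩)

lemma rIdx_injOn {r r' : ℕ} (hr : r ∈ rowsOf n C) (hr' : r' ∈ rowsOf n C)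
    (h : rIdx n C r = rIdx n C r') : r = r' := by
  rcases Nat.lt_trichotomy r r' with hc | hc | hc
  · exact absurd h (ne_of_lt (rIdx_lt_rIdx hr hc))
  · exact hc
  · exact absurd h.symm (ne_of_lt (rIdx_lt_rIdx hr' hc))

lemma rIdx_lt_card {r : ℕ} (hr : r ∈ rowsOf n C) :
    rIdx n C r < (rowsOf n C).card := by
  apply Finset.card_lt_card
  constructor
  · exact Finset.filter_subset _ _
  · intro hsub
    have := hsub hr
    rw [Finset.mem_filter] at this
    omega

lemma rIdx_image : (rowsOf n C).image (rIdx n C) = Finset.range (rowsOf n C).card := by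
  apply Finset.eq_of_subset_of_card_le
  · intro x hx
    rw [Finset.mem_image] at hx
    obtain ⟨r, hr, hre⟩ := hx
    exact Finset.mem_range.mpr (hre ▸ rIdx_lt_card hr)
  · rw [Finset.card_range, Finset.card_image_of_injOn
      (fun a ha b hb hab => rIdx_injOn ha hb hab)]

lemma rIdx_surj {i : ℕ} (hi : i < (rowsOf n C).card) :
    ∃ r ∈ rowsOf n C, rIdx n C r = i := by
  have : i ∈ (rowsOf n C).image (rIdx n C) := by
    rw [rIdx_image]; exact Finset.mem_range.mpr hi
  rw [Finset.mem_image] at this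
  exact this

lemma cIdx_lt_cIdx {c c' : ℕ} (hc : c ∈ C) (h : c < c') :
    cIdx C c' < cIdx C c := by
  apply Finset.card_lt_card
  constructor
  · intro x hx
    rw [Finset.mem_filter] at hx ⊢
    exact ⟨hx.1, by omega⟩
  · intro hsub
    have : c ∈ C.filter (fun c'' => c ≤ c'') := Finset.mem_filter.mpr ⟨hc, le_rfl⟩
    have := hsub this
    rw [Finset.mem_filter] at this
    omega

lemma cIdx_injOn {c c' : ℕ} (hc : c ∈ C) (hc' : c' ∈ C)
    (h : cIdx C c = cIdx C c') : c = c' := by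
  rcases Nat.lt_trichotomy c c' with hd | hd | hd
  · exact absurd h.symm (ne_of_lt (cIdx_lt_cIdx hc hd))
  · exact hd
  · exact absurd h (ne_of_lt (cIdx_lt_cIdx hc' hd))

lemma cIdx_pos {c : ℕ} (hc : c ∈ C) : 1 ≤ cIdx C c := by
  have : c ∈ C.filter (fun c' => c ≤ c') := Finset.mem_filter.mpr ⟨hc, le_rfl⟩
  have := Finset.card_pos.mpr ⟨c, this⟩
  exact this

lemma cIdx_le_card (c : ℕ) : cIdx C c ≤ C.card :=
  Finset.card_le_card (Finset.filter_subset _ _)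

lemma cIdx_image : C.image (cIdx C) = Finset.Icc 1 C.card := by
  apply Finset.eq_of_subset_of_card_le
  · intro x hx
    rw [Finset.mem_image] at hx
    obtain ⟨c, hc, hce⟩ := hx
    rw [Finset.mem_Icc]
    exact ⟨hce ▸ cIdx_pos hc, hce ▸ cIdx_le_card c⟩
  · rw [Nat.card_Icc, Finset.card_image_of_injOn
      (fun a ha b hb hab => cIdx_injOn ha hb hab)]
    omega

variable (hC : C ⊆ Finset.Icc 1 n) (hdisj : Disjoint L U)
  (harr : ∀ p ∈ L ∪ U, p.1 ∈ Finset.Icc 1 n ∧ p.1 ∉ C ∧ p.2 ∈ C ∧ p.1 < p.2)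
  (hLcond : ∀ p ∈ L, ∀ c' : ℕ, p.2 < c' → (p.1, c') ∉ L ∪ U)
  (hUcond : ∀ p ∈ U, ∀ r' : ℕ, r' < p.1 → (r', p.2) ∉ L ∪ U)
  (hstar : ∀ c ∈ C, ∃ p ∈ U, p.2 = c)
  (hn : 1 ≤ n)

include hC harr hstar in
lemma two_le_of_mem_C {c : ℕ} (hc : c ∈ C) : 2 ≤ c := by
  obtain ⟨p, hpU, hp2⟩ := hstar c hc
  have := harr p (Finset.mem_union_right _ hpU)
  rw [Finset.mem_Icc] at this
  omega

include hC harr hstar hn in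
lemma one_mem_rows : 1 ∈ rowsOf n C := by
  rw [rowsOf, Finset.mem_sdiff, Finset.mem_Icc]
  refine ⟨⟨le_rfl, hn⟩, fun hc => ?_⟩
  have := two_le_of_mem_C hC harr hstar hc
  omega

lemma rIdx_one : rIdx n C 1 = 0 := by
  rw [rIdx, Finset.card_eq_zero, Finset.filter_eq_empty_iff]
  intro r hr
  rw [rowsOf, Finset.mem_sdiff, Finset.mem_Icc] at hr
  omega

lemma mem_gF_iff {i j : ℕ} :
    (i, j) ∈ gF n C ↔
      ∃ r ∈ rowsOf n C, i = rIdx n C r ∧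
        (j = 0 ∨ ∃ c ∈ C, r < c ∧ j = cIdx C c) := by
  rw [gF, Finset.mem_union]
  constructor
  · rintro (h | h)
    · rw [Finset.mem_image] at h
      obtain ⟨p, hp, hpe⟩ := h
      rw [Finset.mem_filter, Finset.mem_product] at hp
      obtain ⟨⟨h1, h2⟩, h3⟩ := hp
      have e1 : i = rIdx n C p.1 := (congrArg Prod.fst hpe).symm
      have e2 : j = cIdx C p.2 := (congrArg Prod.snd hpe).symm
      exact ⟨p.1, h1, e1, Or.inr ⟨p.2, h2, h3, e2⟩⟩
    · rw [Finset.mem_image] at h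
      obtain ⟨r, hr, hre⟩ := h
      have e1 : i = rIdx n C r := (congrArg Prod.fst hre).symm
      have e2 : j = 0 := (congrArg Prod.snd hre).symm
      exact ⟨r, hr, e1, Or.inl e2⟩
  · rintro ⟨r, hr, he, h0 | ⟨c, hc, hrc, he2⟩⟩
    · right
      rw [Finset.mem_image]
      exact ⟨r, hr, by rw [← he, ← h0]⟩
    · left
      rw [Finset.mem_image]
      refine ⟨(r, c), ?_, by rw [← he, ← he2]⟩
      rw [Finset.mem_filter, Finset.mem_product]
      exact ⟨⟨hr, hc⟩, hrc⟩

lemma gF_ferrers : IsFerrersGrid (gF n C) := by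
  rintro ⟨i, j⟩ hp i' j' hi' hj'
  simp only at hi' hj'
  rw [mem_gF_iff] at hp
  obtain ⟨r, hr, he, hrest⟩ := hp
  have hiR : i < (rowsOf n C).card := he ▸ rIdx_lt_card hr
  obtain ⟨r₁, hr₁, hr₁e⟩ := rIdx_surj (show i' < (rowsOf n C).card by omega)
  have hr₁r : r₁ ≤ r := by
    by_contra hcc
    push_neg at hcc
    have := rIdx_lt_rIdx hr hcc
    omega
  rw [mem_gF_iff]
  refine ⟨r₁, hr₁, hr₁e.symm, ?_⟩
  rcases Nat.eq_zero_or_pos j' with h0 | h0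
  · exact Or.inl h0
  · right
    rcases hrest with h0 | ⟨c, hc, hrc, he2⟩
    · omega
    · have hj'I : j' ∈ Finset.Icc 1 C.card := by
        rw [Finset.mem_Icc]
        have := cIdx_le_card (C := C) c
        omega
      rw [← cIdx_image, Finset.mem_image] at hj'I
      obtain ⟨c', hc', hc'e⟩ := hj'I
      have hcc' : c ≤ c' := by
        by_contra hcc
        push_neg at hcc
        have := cIdx_lt_cIdx hc' hcc
        omega
      exact ⟨c', hc', by omega, hc'e.symm⟩

include hC in
lemma gF_row_iff {r : ℕ} (hr : r ∈ rowsOf n C) (j : ℕ) :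
    (rIdx n C r, j) ∈ gF n C ↔ j < 1 + (C.filter (fun c => r < c)).card := by
  constructor
  · intro h
    rw [mem_gF_iff] at h
    obtain ⟨r₂, hr₂, he, hrest⟩ := h
    have hre : r₂ = r := rIdx_injOn hr₂ hr he.symm
    rw [hre] at hrest
    rcases hrest with h0 | ⟨c, hc, hrc, he2⟩
    · omega
    · have hsub : C.filter (fun c' => c ≤ c') ⊆ C.filter (fun c' => r < c') := by
        intro x hx
        rw [Finset.mem_filter] at hx ⊢
        exact ⟨hx.1, by omega⟩
      have := Finset.card_le_card hsub
      rw [he2]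
      unfold cIdx
      omega
  · intro hj
    rw [mem_gF_iff]
    refine ⟨r, hr, rfl, ?_⟩
    rcases Nat.eq_zero_or_pos j with h0 | h0
    · exact Or.inl h0
    · right
      have himg : (C.filter (fun c => r < c)).image (cIdx C) =
          Finset.Icc 1 (C.filter (fun c => r < c)).card := by
        apply Finset.eq_of_subset_of_card_le
        · intro x hx
          rw [Finset.mem_image] at hx
          obtain ⟨c, hcm, hce⟩ := hx
          rw [Finset.mem_filter] at hcm
          rw [Finset.mem_Icc]
          have hsub : C.filter (fun c' => c ≤ c') ⊆ C.filter (fun c' => r < c') := by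
            intro x hx
            rw [Finset.mem_filter] at hx ⊢
            refine ⟨hx.1, ?_⟩
            have := hcm.2
            omega
          have h2 := Finset.card_le_card hsub
          have h3 := cIdx_pos hcm.1
          unfold cIdx at *
          omega
        · rw [Nat.card_Icc, Finset.card_image_of_injOn
            (fun a ha b hb hab =>
              cIdx_injOn (Finset.mem_filter.mp ha).1 (Finset.mem_filter.mp hb).1 hab)]
          omega
      have hjm : j ∈ Finset.Icc 1 (C.filter (fun c => r < c)).card := by
        rw [Finset.mem_Icc]; omega
      rw [← himg, Finset.mem_image] at hjm
      obtain ⟨c, hcm, hce⟩ := hjm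
      rw [Finset.mem_filter] at hcm
      exact ⟨c, hcm.1, hcm.2, hce.symm⟩

lemma gF_col0_iff (i : ℕ) : (i, 0) ∈ gF n C ↔ i < (rowsOf n C).card := by
  rw [mem_gF_iff]
  constructor
  · rintro ⟨r, hr, he, h0 | ⟨c, hc, hrc, he2⟩⟩
    · exact he ▸ rIdx_lt_card hr
    · have := cIdx_pos hc
      omega
  · intro hi
    obtain ⟨r, hr, hre⟩ := rIdx_surj hi
    exact ⟨r, hr, hre.symm, Or.inl rfl⟩

lemma gF_hgt0 : hgt (gF n C) 0 = (rowsOf n C).card :=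
  hgt_eq gF_ferrers (fun i => gF_col0_iff i)

include hC harr hstar hn in
lemma gF_lam0 : lam (gF n C) 0 = C.card + 1 := by
  have h1 := one_mem_rows hC harr hstar hn
  have h2 : (0 : ℕ) = rIdx n C 1 := rIdx_one.symm
  apply lam_eq gF_ferrers
  intro j
  rw [h2, gF_row_iff hC h1]
  have : C.filter (fun c => 1 < c) = C := by
    apply Finset.filter_true_of_mem
    intro c hc
    have := two_le_of_mem_C hC harr hstar hc
    omega
  rw [this]
  omega

include hC in
lemma gF_col_iff {c : ℕ} (hc : c ∈ C) (i : ℕ) :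
    (i, cIdx C c) ∈ gF n C ↔ i < ((rowsOf n C).filter (fun r => r < c)).card := by
  constructor
  · intro h
    rw [mem_gF_iff] at h
    obtain ⟨r, hr, he, h0 | ⟨c', hc', hrc', he2⟩⟩ := h
    · have := cIdx_pos hc
      omega
    · have : c' = c := cIdx_injOn hc' hc he2.symm
      subst this
      have hsub : (rowsOf n C).filter (fun r' => r' < r) ⊂
          (rowsOf n C).filter (fun r' => r' < c') := by
        constructor
        · intro x hx
          rw [Finset.mem_filter] at hx ⊢
          exact ⟨hx.1, by omega⟩
        · intro hsub
          have := hsub (Finset.mem_filter.mpr ⟨hr, hrc'⟩)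
          rw [Finset.mem_filter] at this
          omega
      have := Finset.card_lt_card hsub
      rw [he]
      unfold rIdx
      exact this
  · intro hi
    have himg : ((rowsOf n C).filter (fun r => r < c)).image (rIdx n C) =
        Finset.range ((rowsOf n C).filter (fun r => r < c)).card := by
      apply Finset.eq_of_subset_of_card_le
      · intro x hx
        rw [Finset.mem_image] at hx
        obtain ⟨r, hrm, hre⟩ := hx
        rw [Finset.mem_filter] at hrm
        rw [Finset.mem_range]
        have hsub : (rowsOf n C).filter (fun r' => r' < r) ⊂
            (rowsOf n C).filter (fun r' => r' < c) := by
          constructor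
          · intro y hy
            rw [Finset.mem_filter] at hy ⊢
            refine ⟨hy.1, ?_⟩
            have := hrm.2
            omega
          · intro hss
            have := hss (Finset.mem_filter.mpr ⟨hrm.1, hrm.2⟩)
            rw [Finset.mem_filter] at this
            omega
        have := Finset.card_lt_card hsub
        rw [← hre] at *
        unfold rIdx at *
        omega
      · rw [Finset.card_range, Finset.card_image_of_injOn
          (fun a ha b hb hab =>
            rIdx_injOn (Finset.mem_filter.mp ha).1 (Finset.mem_filter.mp hb).1 hab)]
    have : i ∈ Finset.range ((rowsOf n C).filter (fun r => r < c)).card :=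
      Finset.mem_range.mpr hi
    rw [← himg, Finset.mem_image] at this
    obtain ⟨r, hrm, hre⟩ := this
    rw [Finset.mem_filter] at hrm
    rw [mem_gF_iff]
    exact ⟨r, hrm.1, hre.symm, Or.inr ⟨c, hc, hrm.2, rfl⟩⟩

include hC in
lemma gF_hgt {c : ℕ} (hc : c ∈ C) :
    hgt (gF n C) (cIdx C c) = ((rowsOf n C).filter (fun r => r < c)).card :=
  hgt_eq gF_ferrers (fun i => gF_col_iff hC hc i)

include hC in
lemma count_lt {x : ℕ} (hx : x ∈ Finset.Icc 1 n) :
    ((rowsOf n C).filter (fun y => y < x)).card + (C.filter (fun y => y < x)).card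
      = x - 1 := by
  have hun : rowsOf n C ∪ C = Finset.Icc 1 n := by
    rw [rowsOf, Finset.sdiff_union_of_subset hC]
  have hdisj2 : Disjoint ((rowsOf n C).filter (fun y => y < x))
      (C.filter (fun y => y < x)) := by
    apply Finset.disjoint_filter_filter
    rw [rowsOf]
    exact Finset.sdiff_disjoint
  rw [← Finset.card_union_of_disjoint hdisj2, ← Finset.filter_union, hun]
  have : (Finset.Icc 1 n).filter (fun y => y < x) = Finset.Icc 1 (x - 1) := by
    ext y
    rw [Finset.mem_filter, Finset.mem_Icc, Finset.mem_Icc]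
    rw [Finset.mem_Icc] at hx
    omega
  rw [this, Nat.card_Icc]
  omega

lemma C_split {x : ℕ} (hx : x ∉ C) :
    (C.filter (fun y => y < x)).card + (C.filter (fun y => x < y)).card = C.card := by
  have h0 := Finset.card_filter_add_card_filter_not (s := C)
    (fun y => y < x)
  have he : C.filter (fun y => x < y) = C.filter (fun a => ¬ a < x) := by
    apply Finset.filter_congr
    intro y hy
    have : y ≠ x := fun h => hx (h ▸ hy)
    constructor
    · intro h; omega
    · intro h; omega
  rw [he]
  exact h0

lemma C_split' (x : ℕ) :
    (C.filter (fun y => y < x)).card + (C.filter (fun y => x ≤ y)).card = C.card := by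
  have h0 := Finset.card_filter_add_card_filter_not (s := C)
    (fun y => y < x)
  have he : C.filter (fun y => x ≤ y) = C.filter (fun a => ¬ a < x) := by
    apply Finset.filter_congr
    intro y hy
    constructor
    · intro h; omega
    · intro h; omega
  rw [he]
  exact h0

include hC harr hstar hn in
lemma gF_rho {r : ℕ} (hr : r ∈ rowsOf n C) : rho (gF n C) (rIdx n C r) = r := by
  have hrow := gF_lam0 hC harr hstar hn
  have hlam : lam (gF n C) (rIdx n C r) = 1 + (C.filter (fun c => r < c)).card :=
    lam_eq gF_ferrers (gF_row_iff hC hr)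
  have hrC : r ∉ C := by
    rw [rowsOf, Finset.mem_sdiff] at hr
    exact hr.2
  have hsplit := C_split (C := C) hrC
  have hrI : r ∈ Finset.Icc 1 n := by
    rw [rowsOf, Finset.mem_sdiff] at hr
    exact hr.1
  have hcount := count_lt hC hrI
  have h1 : 1 ≤ r := by rw [Finset.mem_Icc] at hrI; omega
  have hK : (C.filter (fun c => r < c)).card ≤ C.card := by
    exact Finset.card_le_card (Finset.filter_subset _ _)
  unfold rho
  rw [hlam, hrow]
  unfold rIdx
  omega

include hC harr hstar hn in
lemma gF_gam {c : ℕ} (hc : c ∈ C) : gam (gF n C) (cIdx C c) = c := by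
  have hrow := gF_lam0 hC harr hstar hn
  have hhgt := gF_hgt hC hc
  have hsplit := C_split' (C := C) c
  have hcount := count_lt hC (hC hc)
  have h2 := two_le_of_mem_C hC harr hstar hc
  have hle := cIdx_le_card (C := C) c
  have hpos := cIdx_pos hc
  unfold gam
  rw [hrow, hhgt]
  unfold cIdx at *
  omega

include harr in
lemma arrow_row_mem {p : ℕ × ℕ} (hp : p ∈ L ∪ U) : p.1 ∈ rowsOf n C := by
  obtain ⟨h1, h2, _, _⟩ := harr p hp
  rw [rowsOf, Finset.mem_sdiff]
  exact ⟨h1, h2⟩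

include hLcond in
lemma L_right {p q : ℕ × ℕ} (hp : p ∈ L) (hq : q ∈ L ∪ U) (h : q.1 = p.1) :
    q.2 ≤ p.2 := by
  by_contra hc
  push_neg at hc
  have := hLcond p hp q.2 hc
  rw [← h] at this
  exact this (by rw [show (q.1, q.2) = q from rfl]; exact hq)

include hUcond in
lemma U_high {p q : ℕ × ℕ} (hp : p ∈ U) (hq : q ∈ L ∪ U) (h : q.2 = p.2) :
    p.1 ≤ q.1 := by
  by_contra hc
  push_neg at hc
  have := hUcond p hp q.1 hc
  rw [← h] at this
  exact this (by rw [show (q.1, q.2) = q from rfl]; exact hq)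

include hdisj hLcond in
lemma L_unique {p q : ℕ × ℕ} (hp : p ∈ L) (hq : q ∈ L) (h : q.1 = p.1) : p = q := by
  have h1 := L_right hLcond hp (Finset.mem_union_left _ hq) h
  have h2 := L_right hLcond hq (Finset.mem_union_left _ hp) h.symm
  exact Prod.ext h.symm (by omega)

include hdisj hUcond in
lemma U_unique {p q : ℕ × ℕ} (hp : p ∈ U) (hq : q ∈ U) (h : q.2 = p.2) : p = q := by
  have h1 := U_high hUcond hp (Finset.mem_union_right _ hq) h
  have h2 := U_high hUcond hq (Finset.mem_union_right _ hp) h.symm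
  exact Prod.ext (by omega) h.symm

include hC hdisj harr hUcond hstar in
lemma top_unrestricted {p : ℕ × ℕ} (hp : p ∈ L) : p.1 ≠ 1 := by
  intro h1
  obtain ⟨_, _, hpC, _⟩ := harr p (Finset.mem_union_left _ hp)
  obtain ⟨u, huU, hu2⟩ := hstar p.2 hpC
  have hle := U_high hUcond huU (Finset.mem_union_left _ hp) hu2.symm
  obtain ⟨hu1, _, _, _⟩ := harr u (Finset.mem_union_right _ huU)
  rw [Finset.mem_Icc] at hu1
  have : u.1 = p.1 := by omega
  have hup : u = p := Prod.ext this hu2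
  subst hup
  exact (Finset.disjoint_left.mp hdisj hp) huU

lemma mem_gP_iff {i j : ℕ} :
    (i, j) ∈ gP n C L U ↔
      (∃ p ∈ L ∪ U, i = rIdx n C p.1 ∧ j = cIdx C p.2) ∨
        (j = 0 ∧ ∃ r ∈ rowsOf n C, (∀ p ∈ L, p.1 ≠ r) ∧ i = rIdx n C r) := by
  rw [gP, Finset.mem_union]
  constructor
  · rintro (h | h)
    · rw [Finset.mem_image] at h
      obtain ⟨p, hp, hpe⟩ := h
      exact Or.inl ⟨p, hp, (congrArg Prod.fst hpe).symm, (congrArg Prod.snd hpe).symm⟩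
    · rw [Finset.mem_image] at h
      obtain ⟨r, hr, hre⟩ := h
      rw [Finset.mem_filter] at hr
      exact Or.inr ⟨(congrArg Prod.snd hre).symm, r, hr.1, hr.2,
        (congrArg Prod.fst hre).symm⟩
  · rintro (⟨p, hp, h1, h2⟩ | ⟨h0, r, hr, hunr, he⟩)
    · left
      rw [Finset.mem_image]
      exact ⟨p, hp, by rw [← h1, ← h2]⟩
    · right
      rw [Finset.mem_image]
      exact ⟨r, Finset.mem_filter.mpr ⟨hr, hunr⟩, by rw [← he, ← h0]⟩

include harr in
lemma gP_sub : gP n C L U ⊆ gF n C := by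
  rintro ⟨i, j⟩ hp
  rw [mem_gP_iff] at hp
  rw [mem_gF_iff]
  rcases hp with ⟨p, hp, h1, h2⟩ | ⟨h0, r, hr, hunr, he⟩
  · obtain ⟨_, _, hpC, hlt⟩ := harr p hp
    exact ⟨p.1, arrow_row_mem harr hp, h1, Or.inr ⟨p.2, hpC, hlt, h2⟩⟩
  · exact ⟨r, hr, he, Or.inl h0⟩

include hC hdisj harr hUcond hstar hn in
lemma root_mem_gP : (0, 0) ∈ gP n C L U := by
  rw [mem_gP_iff]
  right
  refine ⟨rfl, 1, one_mem_rows hC harr hstar hn, ?_, rIdx_one.symm⟩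
  intro p hp
  exact top_unrestricted hC hdisj harr hUcond hstar hp

include hC hdisj harr hLcond hUcond hstar in
lemma above_iff {p : ℕ × ℕ} (hp : p ∈ L ∪ U) :
    (∃ i' < rIdx n C p.1, (i', cIdx C p.2) ∈ gP n C L U) ↔ p ∈ L := by
  constructor
  · rintro ⟨i', hi', hmem⟩
    rw [mem_gP_iff] at hmem
    rcases hmem with ⟨q, hq, h1, h2⟩ | ⟨h0, _⟩
    · have hq2 : q.2 = p.2 := by
        apply cIdx_injOn (harr q hq).2.2.1 (harr p hp).2.2.1 h2.symm
      have hq1 : q.1 < p.1 := by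
        by_contra hcc
        push_neg at hcc
        have := rIdx_mono (n := n) (C := C) hcc
        omega
      rcases Finset.mem_union.mp hp with hpL | hpU
      · exact hpL
      · exfalso
        have := hUcond p hpU q.1 hq1
        rw [← hq2] at this
        exact this (by rw [show (q.1, q.2) = q from rfl]; exact hq)
    · exfalso
      have := cIdx_pos (harr p hp).2.2.1
      omega
  · intro hpL
    obtain ⟨u, huU, hu2⟩ := hstar p.2 (harr p hp).2.2.1
    have hle := U_high hUcond huU (Finset.mem_union_left _ hpL) hu2.symm
    have hne : u ≠ p := by
      intro h
      exact (Finset.disjoint_left.mp hdisj hpL) (h ▸ huU)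
    have hu1 : u.1 < p.1 := by
      rcases Nat.lt_or_ge u.1 p.1 with h | h
      · exact h
      · exfalso
        have he : u.1 = p.1 := by omega
        exact hne (Prod.ext he hu2)
    refine ⟨rIdx n C u.1, ?_, ?_⟩
    · exact rIdx_lt_rIdx (arrow_row_mem harr (Finset.mem_union_right _ huU)) hu1
    · rw [mem_gP_iff]
      exact Or.inl ⟨u, Finset.mem_union_right _ huU, rfl, by rw [hu2]⟩

include hC hdisj harr hLcond hUcond hstar in
lemma left_iff {p : ℕ × ℕ} (hp : p ∈ L ∪ U) :
    (∃ j' < cIdx C p.2, (rIdx n C p.1, j') ∈ gP n C L U) ↔ p ∈ U := by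
  constructor
  · rintro ⟨j', hj', hmem⟩
    rcases Finset.mem_union.mp hp with hpL | hpU
    · exfalso
      rw [mem_gP_iff] at hmem
      rcases hmem with ⟨q, hq, h1, h2⟩ | ⟨h0, r, hr, hunr, he⟩
      · have hq1 : q.1 = p.1 := by
          apply rIdx_injOn (arrow_row_mem harr hq) (arrow_row_mem harr hp) h1.symm
        have hq2 : q.2 ≤ p.2 := L_right hLcond hpL hq hq1
        have : q.2 ≠ p.2 := by
          intro h
          rw [h2, h] at hj'
          omega
        have hlt : q.2 < p.2 := by omega
        have := cIdx_lt_cIdx (harr q hq).2.2.1 hlt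
        omega
      · have : p.1 = r := rIdx_injOn (arrow_row_mem harr hp) hr he
        exact hunr p hpL this
    · exact hpU
  · intro hpU
    by_cases hres : ∀ q ∈ L, q.1 ≠ p.1
    · refine ⟨0, cIdx_pos (harr p hp).2.2.1, ?_⟩
      rw [mem_gP_iff]
      right
      exact ⟨rfl, p.1, arrow_row_mem harr hp, fun q hq => hres q hq, rfl⟩
    · push_neg at hres
      obtain ⟨q, hqL, hq1⟩ := hres
      have hle : p.2 ≤ q.2 := L_right hLcond hqL hp hq1.symm
      have hne : p.2 ≠ q.2 := by
        intro h
        have hpq : p = q := Prod.ext hq1.symm h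
        exact (Finset.disjoint_left.mp hdisj hqL) (hpq ▸ hpU)
      have hlt : p.2 < q.2 := by omega
      refine ⟨cIdx C q.2, cIdx_lt_cIdx (harr p hp).2.2.1 hlt, ?_⟩
      rw [mem_gP_iff]
      left
      exact ⟨q, Finset.mem_union_left _ hqL, by rw [hq1], rfl⟩

include hC hdisj harr hLcond hUcond hstar hn in
lemma gP_xor : ∀ pt ∈ gP n C L U, pt ≠ (0, 0) →
    Xor' (∃ i < pt.1, (i, pt.2) ∈ gP n C L U)
      (∃ j < pt.2, (pt.1, j) ∈ gP n C L U) := by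
  rintro ⟨i, j⟩ hpt hne
  rw [mem_gP_iff] at hpt
  rcases hpt with ⟨p, hp, h1, h2⟩ | ⟨h0, r, hr, hunr, he⟩
  · subst h1; subst h2
    rcases Finset.mem_union.mp hp with hpL | hpU
    · left
      constructor
      · exact (above_iff hC hdisj harr hLcond hUcond hstar hp).2 hpL
      · intro hcc
        have := (left_iff hC hdisj harr hLcond hUcond hstar hp).1 hcc
        exact (Finset.disjoint_left.mp hdisj hpL) this
    · right
      constructor
      · exact (left_iff hC hdisj harr hLcond hUcond hstar hp).2 hpU
      · intro hcc
        have := (above_iff hC hdisj harr hLcond hUcond hstar hp).1 hcc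
        exact (Finset.disjoint_left.mp hdisj this) hpU
  · subst h0; subst he
    have hr1 : r ≠ 1 := by
      intro h
      subst h
      exact hne (by rw [rIdx_one])
    have hrgt : 1 < r := by
      rw [rowsOf, Finset.mem_sdiff, Finset.mem_Icc] at hr
      omega
    left
    constructor
    · refine ⟨0, ?_, root_mem_gP hC hdisj harr hUcond hstar hn⟩
      have := rIdx_lt_rIdx (one_mem_rows hC harr hstar hn) hrgt
      rw [rIdx_one] at this
      exact this
    · rintro ⟨j', hj', _⟩
      omega

include hC harr hstar hn in
lemma gF_sub_range : gF n C ⊆ Finset.range n ×ˢ Finset.range n := by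
  have hCcard : C.card ≤ n - 1 := by
    have hsub : C ⊆ Finset.Icc 2 n := by
      intro c hc
      rw [Finset.mem_Icc]
      have h1 := two_le_of_mem_C hC harr hstar hc
      have h2 := hC hc
      rw [Finset.mem_Icc] at h2
      omega
    have := Finset.card_le_card hsub
    rw [Nat.card_Icc] at this
    omega
  rintro ⟨i, j⟩ h
  rw [mem_gF_iff] at h
  obtain ⟨r, hr, he, hrest⟩ := h
  rw [Finset.mem_product, Finset.mem_range, Finset.mem_range]
  constructor
  · have h1 := rIdx_lt_card hr
    have h2 : (rowsOf n C).card ≤ n := by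
      have : rowsOf n C ⊆ Finset.Icc 1 n := by
        rw [rowsOf]; exact Finset.sdiff_subset
      have := Finset.card_le_card this
      rw [Nat.card_Icc] at this
      omega
    omega
  · rcases hrest with h0 | ⟨c, hc, hrc, he2⟩
    · omega
    · have := cIdx_le_card (C := C) c
      omega

include hC hdisj harr hLcond hUcond hstar hn in
lemma gP_card : (gP n C L U).card = n := by
  have hdisj2 : Disjoint ((L ∪ U).image (fun p => (rIdx n C p.1, cIdx C p.2)))
      (((rowsOf n C).filter (fun r => ∀ p ∈ L, p.1 ≠ r)).image
        (fun r => (rIdx n C r, 0))) := by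
    rw [Finset.disjoint_left]
    intro a ha hb
    rw [Finset.mem_image] at ha hb
    obtain ⟨p, hp, hpe⟩ := ha
    obtain ⟨r, hr, hre⟩ := hb
    have h1 : a.2 = cIdx C p.2 := (congrArg Prod.snd hpe).symm
    have h2 : a.2 = 0 := (congrArg Prod.snd hre).symm
    have := cIdx_pos (harr p hp).2.2.1
    omega
  rw [gP, Finset.card_union_of_disjoint hdisj2]
  have hA : ((L ∪ U).image (fun p => (rIdx n C p.1, cIdx C p.2))).card =
      L.card + U.card := by
    rw [Finset.card_image_of_injOn, Finset.card_union_of_disjoint hdisj]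
    intro p hp q hq hpq
    simp only [Finset.coe_union, Set.mem_union, Finset.mem_coe] at hp hq
    have hp' : p ∈ L ∪ U := by rw [Finset.mem_union]; exact hp
    have hq' : q ∈ L ∪ U := by rw [Finset.mem_union]; exact hq
    have e1 : rIdx n C p.1 = rIdx n C q.1 := congrArg Prod.fst hpq
    have e2 : cIdx C p.2 = cIdx C q.2 := congrArg Prod.snd hpq
    exact Prod.ext (rIdx_injOn (arrow_row_mem harr hp') (arrow_row_mem harr hq') e1)
      (cIdx_injOn (harr p hp').2.2.1 (harr q hq').2.2.1 e2)
  have hB : (((rowsOf n C).filter (fun r => ∀ p ∈ L, p.1 ≠ r)).image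
      (fun r => (rIdx n C r, 0))).card =
      ((rowsOf n C).filter (fun r => ∀ p ∈ L, p.1 ≠ r)).card := by
    apply Finset.card_image_of_injOn
    intro a ha b hb hab
    simp only [Finset.coe_filter, Set.mem_setOf_eq] at ha hb
    exact rIdx_injOn ha.1 hb.1 (congrArg Prod.fst hab)
  have hU : U.card = C.card := by
    apply Finset.card_bij (fun p _ => p.2)
    · intro p hp
      exact (harr p (Finset.mem_union_right _ hp)).2.2.1
    · intro p hp q hq hpq
      exact U_unique hdisj hUcond hp hq hpq.symm
    · intro c hc
      obtain ⟨p, hpU, hp2⟩ := hstar c hc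
      exact ⟨p, hpU, hp2⟩
  have hL : L.card = ((rowsOf n C).filter (fun r => ¬ ∀ p ∈ L, p.1 ≠ r)).card := by
    apply Finset.card_bij (fun p _ => p.1)
    · intro p hp
      rw [Finset.mem_filter]
      refine ⟨arrow_row_mem harr (Finset.mem_union_left _ hp), ?_⟩
      push_neg
      exact ⟨p, hp, rfl⟩
    · intro p hp q hq hpq
      exact L_unique hdisj hLcond hp hq hpq.symm
    · intro r hr
      rw [Finset.mem_filter] at hr
      obtain ⟨hr1, hr2⟩ := hr
      push_neg at hr2
      obtain ⟨p, hp, hpe⟩ := hr2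
      exact ⟨p, hp, hpe⟩
  have hsplit := Finset.card_filter_add_card_filter_not
    (s := rowsOf n C) (fun r => ∀ p ∈ L, p.1 ≠ r)
  have hrows : (rowsOf n C).card = n - C.card := by
    rw [rowsOf, Finset.card_sdiff_of_subset hC, Nat.card_Icc]
    omega
  have hCn : C.card ≤ n - 1 := by
    have hsub : C ⊆ Finset.Icc 2 n := by
      intro c hc
      rw [Finset.mem_Icc]
      have h1 := two_le_of_mem_C hC harr hstar hc
      have h2 := hC hc
      rw [Finset.mem_Icc] at h2
      omega
    have := Finset.card_le_card hsub
    rw [Nat.card_Icc] at this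
    omega
  rw [hA, hB]
  omega

include hC hdisj harr hLcond hUcond hstar hn in
lemma gT_mem_TLT : (gF n C, gP n C L U) ∈ TLT n := by
  rw [TLT, Finset.mem_filter]
  refine ⟨?_, ⟨?_, gF_ferrers, gP_sub harr,
    root_mem_gP hC hdisj harr hUcond hstar hn,
    gP_xor hC hdisj harr hLcond hUcond hstar hn, ?_, ?_⟩,
    gP_card hC hdisj harr hLcond hUcond hstar hn⟩
  · rw [Finset.mem_product, Finset.mem_powerset, Finset.mem_powerset]
    exact ⟨gF_sub_range hC harr hstar hn,
      (gP_sub harr).trans (gF_sub_range hC harr hstar hn)⟩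
  · exact ⟨(0, 0), by
      rw [gF_col0_iff]
      have := one_mem_rows hC harr hstar hn
      exact Finset.card_pos.mpr ⟨1, this⟩⟩
  · -- row cover
    rintro ⟨i, j⟩ hij
    rw [mem_gF_iff] at hij
    obtain ⟨r, hr, he, _⟩ := hij
    by_cases hres : ∀ p ∈ L, p.1 ≠ r
    · refine ⟨(rIdx n C r, 0), ?_, he.symm⟩
      rw [mem_gP_iff]
      exact Or.inr ⟨rfl, r, hr, hres, rfl⟩
    · push_neg at hres
      obtain ⟨p, hpL, hpe⟩ := hres
      refine ⟨(rIdx n C p.1, cIdx C p.2), ?_, by rw [hpe, ← he]⟩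
      rw [mem_gP_iff]
      exact Or.inl ⟨p, Finset.mem_union_left _ hpL, rfl, rfl⟩
  · -- column cover
    rintro ⟨i, j⟩ hij
    rw [mem_gF_iff] at hij
    obtain ⟨r, hr, he, hrest⟩ := hij
    rcases hrest with h0 | ⟨c, hc, hrc, he2⟩
    · exact ⟨(0, 0), root_mem_gP hC hdisj harr hUcond hstar hn, by rw [h0]⟩
    · obtain ⟨u, huU, hu2⟩ := hstar c hc
      refine ⟨(rIdx n C u.1, cIdx C u.2), ?_, by rw [hu2, ← he2]⟩
      rw [mem_gP_iff]
      exact Or.inl ⟨u, Finset.mem_union_right _ huU, rfl, rfl⟩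

include hC hdisj harr hLcond hUcond hstar hn in
lemma Lpre_gP : Lpre (gP n C L U) =
    L.image (fun p => (rIdx n C p.1, cIdx C p.2)) := by
  ext ⟨i, j⟩
  rw [Lpre, Finset.mem_filter]
  constructor
  · rintro ⟨hmem, hj, habove⟩
    rw [mem_gP_iff] at hmem
    rcases hmem with ⟨p, hp, h1, h2⟩ | ⟨h0, _⟩
    · have hpL : p ∈ L := by
        apply (above_iff hC hdisj harr hLcond hUcond hstar hp).1
        rw [← h1, ← h2]
        exact habove
      rw [Finset.mem_image]
      exact ⟨p, hpL, by rw [← h1, ← h2]⟩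
    · simp only at hj h0
      omega
  · intro h
    rw [Finset.mem_image] at h
    obtain ⟨p, hpL, hpe⟩ := h
    have hp : p ∈ L ∪ U := Finset.mem_union_left _ hpL
    have e1 : i = rIdx n C p.1 := (congrArg Prod.fst hpe).symm
    have e2 : j = cIdx C p.2 := (congrArg Prod.snd hpe).symm
    refine ⟨?_, ?_, ?_⟩
    · rw [mem_gP_iff]
      exact Or.inl ⟨p, hp, e1, e2⟩
    · simp only
      rw [e2]
      exact cIdx_pos (harr p hp).2.2.1
    · simp only
      rw [e1, e2]
      exact (above_iff hC hdisj harr hLcond hUcond hstar hp).2 hpL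

include hC hdisj harr hLcond hUcond hstar hn in
lemma Upre_gP : Upre (gP n C L U) =
    U.image (fun p => (rIdx n C p.1, cIdx C p.2)) := by
  ext ⟨i, j⟩
  rw [Upre, Finset.mem_filter]
  constructor
  · rintro ⟨hmem, hj, htop⟩
    rw [mem_gP_iff] at hmem
    rcases hmem with ⟨p, hp, h1, h2⟩ | ⟨h0, _⟩
    · have hpU : p ∈ U := by
        rcases Finset.mem_union.mp hp with hL | hU
        · exfalso
          have := (above_iff hC hdisj harr hLcond hUcond hstar hp).2 hL
          obtain ⟨i', hi', hmm⟩ := this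
          exact htop i' (by omega) (by rw [← h2] at hmm; exact hmm)
        · exact hU
      rw [Finset.mem_image]
      exact ⟨p, hpU, by rw [← h1, ← h2]⟩
    · simp only at hj h0
      omega
  · intro h
    rw [Finset.mem_image] at h
    obtain ⟨p, hpU, hpe⟩ := h
    have hp : p ∈ L ∪ U := Finset.mem_union_right _ hpU
    have e1 : i = rIdx n C p.1 := (congrArg Prod.fst hpe).symm
    have e2 : j = cIdx C p.2 := (congrArg Prod.snd hpe).symm
    refine ⟨?_, ?_, ?_⟩
    · rw [mem_gP_iff]
      exact Or.inl ⟨p, hp, e1, e2⟩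
    · simp only
      rw [e2]
      exact cIdx_pos (harr p hp).2.2.1
    · simp only
      intro i' hi' hmm
      have : ∃ i'' < i, (i'', j) ∈ gP n C L U := ⟨i', hi', hmm⟩
      rw [e1, e2] at this
      have hpL := (above_iff hC hdisj harr hLcond hUcond hstar hp).1 this
      exact (Finset.disjoint_left.mp hdisj hpL) hpU

include hC hdisj harr hLcond hUcond hstar hn in
lemma fmap_gT : fMap (gF n C, gP n C L U) = (C, L, U) := by
  have hlam0 := gF_lam0 hC harr hstar hn
  have hCcomp : (Finset.Ico 1 (lam (gF n C) 0)).image (gam (gF n C)) = C := by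
    rw [hlam0, Finset.Ico_add_one_right_eq_Icc, ← cIdx_image, Finset.image_image]
    rw [show ((gam (gF n C)) ∘ (cIdx C)) = fun c => gam (gF n C) (cIdx C c) from rfl]
    have : ∀ c ∈ C, gam (gF n C) (cIdx C c) = c := fun c hc =>
      gF_gam hC harr hstar hn hc
    calc C.image (fun c => gam (gF n C) (cIdx C c)) = C.image id :=
          Finset.image_congr (fun c hc => this c hc)
      _ = C := Finset.image_id
  have hphi : ∀ p ∈ L ∪ U,
      phi (gF n C) (rIdx n C p.1, cIdx C p.2) = p := by
    intro p hp
    unfold phi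
    dsimp only
    rw [gF_rho hC harr hstar hn (arrow_row_mem harr hp),
      gF_gam hC harr hstar hn (harr p hp).2.2.1]
  have hLcomp : (Lpre (gP n C L U)).image (phi (gF n C)) = L := by
    rw [Lpre_gP hC hdisj harr hLcond hUcond hstar hn, Finset.image_image]
    calc L.image ((phi (gF n C)) ∘ (fun p => (rIdx n C p.1, cIdx C p.2)))
        = L.image id := Finset.image_congr
          (fun p hp => hphi p (Finset.mem_union_left _ hp))
      _ = L := Finset.image_id
  have hUcomp : (Upre (gP n C L U)).image (phi (gF n C)) = U := by
    rw [Upre_gP hC hdisj harr hLcond hUcond hstar hn, Finset.image_image]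
    calc U.image ((phi (gF n C)) ∘ (fun p => (rIdx n C p.1, cIdx C p.2)))
        = U.image id := Finset.image_congr
          (fun p hp => hphi p (Finset.mem_union_right _ hp))
      _ = U := Finset.image_id
  show (_, _, _) = (C, L, U)
  rw [hCcomp, hLcomp, hUcomp]

end Inverse

end Aux4

/-- there is a bijection between tree-like tableaux of size `n`
and alternative tableaux of size `n` in which every column contains an up
arrow, sending `left` to `urr - 1`, preserving `noc`, and sending `top` to the
number of arrows in the topmost row. -/
theorem tlt_atstar_bijection (n : ℕ) (hn : 1 ≤ n) :
    ∃ f : Finset (ℕ × ℕ) × Finset (ℕ × ℕ) →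
        Finset ℕ × Finset (ℕ × ℕ) × Finset (ℕ × ℕ),
      Set.BijOn f (TLT n : Set _) (ATstar n : Set _) ∧
      ∀ T ∈ TLT n,
        urrA n (f T).1 (f T).2.1 = leftT T.2 + 1 ∧
        nocA n (f T).1 (f T).2.1 (f T).2.2 = nocT T.1 T.2 ∧
        topA n (f T).1 (f T).2.1 (f T).2.2 = topT T.2 := by
  classical
  have unpack : ∀ T, T ∈ TLT n → IsTLT T.1 T.2 ∧ T.2.card = n := by
    intro T hT
    rw [TLT, Finset.mem_filter] at hT
    exact hT.2
  refine ⟨Aux4.fMap, ⟨?_, ?_, ?_⟩, ?_⟩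
  · -- MapsTo
    intro T hT
    obtain ⟨⟨hne, hF, hPF, hroot, hxor, hrowc, hcolc⟩, hcard⟩ := unpack T hT
    exact Aux4.fmap_mem_ATstar hF hPF hroot hxor hrowc hcolc hcard
  · -- InjOn
    intro T hT T' hT' heq
    obtain ⟨⟨hne, hF, hPF, hroot, hxor, hrowc, hcolc⟩, hcard⟩ := unpack T hT
    obtain ⟨⟨hne', hF', hPF', hroot', hxor', hrowc', hcolc'⟩, hcard'⟩ := unpack T' hT'
    have := Aux4.fmap_injective hF hPF hroot hxor hrowc hcolc hcard
      hF' hPF' hroot' hxor' hrowc' hcolc' hcard' heq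
    exact Prod.ext this.1 this.2
  · -- SurjOn
    intro y hy
    have hy' : y ∈ ATstar n := hy
    rw [ATstar, Finset.mem_filter] at hy'
    obtain ⟨hAT, hstar⟩ := hy'
    rw [ATset, Finset.mem_filter] at hAT
    obtain ⟨hpow, hC, hdisj, harr, hLcond, hUcond⟩ := hAT
    refine ⟨(Aux4.gF n y.1, Aux4.gP n y.1 y.2.1 y.2.2), ?_, ?_⟩
    · exact Aux4.gT_mem_TLT hC hdisj harr hLcond hUcond hstar hn
    · exact Aux4.fmap_gT hC hdisj harr hLcond hUcond hstar hn
  · -- statistics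
    intro T hT
    obtain ⟨⟨hne, hF, hPF, hroot, hxor, hrowc, hcolc⟩, hcard⟩ := unpack T hT
    exact ⟨Aux4.urrA_eq hF hPF hroot hxor hrowc hcolc hcard,
      Aux4.nocA_eq hF hPF hroot hxor hrowc hcolc hcard,
      Aux4.topA_eq hF hPF hroot hxor hrowc hcolc hcard⟩
end

section
/- The map Φ sending an alternative tableau of size n in which each column contains an up arrow to a linked partition of {1,...,n} — obtained by labeling the border steps 1,...,n from northeast to southwest and, for each column j with an up arrow in cell (i_1, j) and left arrows in cells (i_2,j),...,(i_t,j) with i_2 < ... < i_t, drawing arcs (i_1,i_2), (i_2,i_3), ..., (i_t,j) — is a bijection onto the set of linked partitions of {1,...,n}. -/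
open Finset Polynomial
open scoped Classical

/-!
In `Phi T` the arcs drawn in a column `c` form a chain through the arrow rows of `c` ending
at `c`, and from a row with a left arrow in column `c` one only reaches vertices `≤ c`.
Hence in a linked partition `A` the column of a vertex with an incoming arc is the largest
vertex reachable from it, the columns are the destinations, the rows of column `c` are the
sources of the arcs into vertices of column `c`, and the topmost of them carries the up
arrow. This is the inverse map `Psi`.
-/

open Relation

section ConsecPairs

variable {S : Finset ℕ} {a b x y : ℕ}

lemma mem_consecPairs :
    (a, b) ∈ consecPairs S ↔ a ∈ S ∧ b ∈ S ∧ a < b ∧ ∀ k ∈ S, ¬(a < k ∧ k < b) := by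
  simp [consecPairs, and_assoc]

lemma exists_consecPairs_fst (hx : x ∈ S) (hy : y ∈ S) (hxy : x < y) :
    ∃ z ≤ y, (x, z) ∈ consecPairs S := by
  have hne : (S.filter (x < ·)).Nonempty := ⟨y, mem_filter.2 ⟨hy, hxy⟩⟩
  obtain ⟨hzS, hxz⟩ := mem_filter.1 (min'_mem _ hne)
  refine ⟨_, min'_le _ _ (mem_filter.2 ⟨hy, hxy⟩), mem_consecPairs.2 ⟨hx, hzS, hxz, ?_⟩⟩
  rintro k hk ⟨hxk, hkz⟩
  exact (min'_le _ k (mem_filter.2 ⟨hk, hxk⟩)).not_gt hkz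

lemma exists_consecPairs_snd (hx : x ∈ S) (hy : y ∈ S) (hxy : x < y) :
    ∃ z ≥ x, (z, y) ∈ consecPairs S := by
  have hne : (S.filter (· < y)).Nonempty := ⟨x, mem_filter.2 ⟨hx, hxy⟩⟩
  obtain ⟨hzS, hzy⟩ := mem_filter.1 (max'_mem _ hne)
  refine ⟨_, le_max' _ _ (mem_filter.2 ⟨hx, hxy⟩), mem_consecPairs.2 ⟨hzS, hy, hzy, ?_⟩⟩
  rintro k hk ⟨hzk, hky⟩
  exact (le_max' _ k (mem_filter.2 ⟨hk, hky⟩)).not_gt hzk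

lemma consecPairs_left_unique {a' : ℕ} (h : (a, b) ∈ consecPairs S)
    (h' : (a', b) ∈ consecPairs S) : a = a' := by
  rw [mem_consecPairs] at h h'
  by_contra hne
  rcases Nat.lt_or_gt_of_ne hne with hlt | hlt
  · exact h.2.2.2 a' h'.1 ⟨hlt, h'.2.2.1⟩
  · exact h'.2.2.2 a h.1 ⟨hlt, h.2.2.1⟩

lemma reflTransGen_consecPairs (hx : x ∈ S) (hy : y ∈ S) (hxy : x ≤ y) :
    ReflTransGen (fun u v => (u, v) ∈ consecPairs S) x y := by
  induction hk : y - x using Nat.strong_induction_on generalizing x with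
  | _ k ih =>
    rcases hxy.eq_or_lt with rfl | hlt
    · exact .refl
    obtain ⟨z, hzy, hxz⟩ := exists_consecPairs_fst hx hy hlt
    have hz := mem_consecPairs.1 hxz
    exact .head hxz (ih (y - z) (by omega) hz.2.1 hzy rfl)

end ConsecPairs

lemma mem_colRows {L U : Finset (ℕ × ℕ)} {r c : ℕ} : r ∈ colRows L U c ↔ (r, c) ∈ L ∪ U := by
  simp [colRows]

lemma mem_Phi {T : Finset ℕ × Finset (ℕ × ℕ) × Finset (ℕ × ℕ)} {a b : ℕ} :
    (a, b) ∈ Phi T ↔ ∃ c ∈ T.1, (a, b) ∈ consecPairs (insert c (colRows T.2.1 T.2.2 c)) := by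
  simp [Phi]

lemma mem_LP_iff {n : ℕ} {A : Finset (ℕ × ℕ)} : A ∈ LP n ↔ IsLP n A := by
  refine ⟨fun h => (mem_filter.1 h).2, fun h => mem_filter.2 ⟨mem_powerset.2 fun p hp => ?_, h⟩⟩
  have := h.1 p hp
  simp only [mem_product, mem_Icc]
  omega

lemma mem_ATstar_iff {n : ℕ} {T : Finset ℕ × Finset (ℕ × ℕ) × Finset (ℕ × ℕ)} :
    T ∈ ATstar n ↔ IsAT n T.1 T.2.1 T.2.2 ∧ ∀ c ∈ T.1, ∃ p ∈ T.2.2, p.2 = c := by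
  refine ⟨fun h => ⟨(mem_filter.1 (mem_filter.1 h).1).2, (mem_filter.1 h).2⟩, fun h => ?_⟩
  refine mem_filter.2 ⟨mem_filter.2 ⟨?_, h.1⟩, h.2⟩
  have hcells : ∀ p ∈ T.2.1 ∪ T.2.2, p ∈ Icc 1 n ×ˢ Icc 1 n := fun p hp =>
    have hp' := h.1.2.2.1 p hp
    mem_product.2 ⟨hp'.1, h.1.1 hp'.2.2.1⟩
  simp only [mem_product, mem_powerset]
  exact ⟨h.1.1, fun p hp => hcells p (mem_union_left _ hp),
    fun p hp => hcells p (mem_union_right _ hp)⟩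

section Reach

def Reach (A : Finset (ℕ × ℕ)) : ℕ → ℕ → Prop :=
  ReflTransGen fun x y => (x, y) ∈ A

/-- For `A = Phi T` this is the column whose block contains `x` as a non-minimal element. -/
noncomputable def maxReach (A : Finset (ℕ × ℕ)) (x : ℕ) : ℕ :=
  ((insert x (A.image Prod.snd)).filter (Reach A x)).sup id

variable {A : Finset (ℕ × ℕ)} {x y : ℕ}

lemma le_maxReach (h : Reach A x y) : y ≤ maxReach A x := by
  refine le_sup (f := id) (mem_filter.2 ⟨?_, h⟩)
  rcases h.cases_tail with rfl | ⟨z, -, hzy⟩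
  · exact mem_insert_self _ _
  · exact mem_insert_of_mem (mem_image_of_mem Prod.snd hzy)

lemma reach_maxReach : Reach A x (maxReach A x) := by
  have hx : x ∈ (insert x (A.image Prod.snd)).filter (Reach A x) :=
    mem_filter.2 ⟨mem_insert_self _ _, ReflTransGen.refl⟩
  obtain ⟨z, hz, hzx⟩ := exists_mem_eq_sup _ ⟨x, hx⟩ id
  rw [maxReach, hzx]
  exact (mem_filter.1 hz).2

lemma maxReach_le_of_reach (h : Reach A x y) : maxReach A y ≤ maxReach A x :=
  le_maxReach (h.trans reach_maxReach)

lemma maxReach_eq_self (hout : ∀ q ∈ A, q.1 ≠ x) : maxReach A x = x := by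
  rcases (reach_maxReach (A := A) (x := x)).cases_head with h | ⟨z, hxz, -⟩
  · exact h.symm
  · exact absurd rfl (hout _ hxz)

end Reach

section Psi

variable {A : Finset (ℕ × ℕ)} {b c r : ℕ}

noncomputable def dests (A : Finset (ℕ × ℕ)) : Finset ℕ :=
  (A.image Prod.snd).filter (IsDest A)

noncomputable def blockRows (A : Finset (ℕ × ℕ)) (c : ℕ) : Finset ℕ :=
  (A.filter fun p => maxReach A p.2 = c).image Prod.fst

noncomputable def arrowCells (A : Finset (ℕ × ℕ)) : Finset (ℕ × ℕ) :=
  A.image fun p => (p.1, maxReach A p.2)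

def IsLeftCell (A : Finset (ℕ × ℕ)) (p : ℕ × ℕ) : Prop :=
  (∃ a, (a, p.1) ∈ A) ∧ maxReach A p.1 = p.2

noncomputable def Psi (A : Finset (ℕ × ℕ)) : Finset ℕ × Finset (ℕ × ℕ) × Finset (ℕ × ℕ) :=
  (dests A, (arrowCells A).filter (IsLeftCell A), (arrowCells A).filter fun p => ¬IsLeftCell A p)

lemma mem_dests : c ∈ dests A ↔ IsDest A c := by
  refine ⟨fun h => (mem_filter.1 h).2, fun h => mem_filter.2 ⟨?_, h⟩⟩
  obtain ⟨p, hp, rfl⟩ := h.1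
  exact mem_image_of_mem _ hp

lemma mem_blockRows : r ∈ blockRows A c ↔ ∃ s, (r, s) ∈ A ∧ maxReach A s = c := by
  simp [blockRows]

lemma mem_arrowCells : (r, c) ∈ arrowCells A ↔ r ∈ blockRows A c := by
  simp [arrowCells, mem_blockRows]

lemma Psi_left_union_up : (Psi A).2.1 ∪ (Psi A).2.2 = arrowCells A :=
  filter_union_filter_not_eq _ _

lemma colRows_Psi : colRows (Psi A).2.1 (Psi A).2.2 c = blockRows A c := by
  ext r
  rw [mem_colRows, Psi_left_union_up, mem_arrowCells]

lemma mem_insert_blockRows_maxReach :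
    b ∈ insert (maxReach A b) (blockRows A (maxReach A b)) := by
  rcases (reach_maxReach (A := A) (x := b)).cases_head with h | ⟨s, hbs, hsc⟩
  · exact h ▸ mem_insert_self _ _
  refine mem_insert_of_mem (mem_blockRows.2 ⟨s, hbs, le_antisymm ?_ (le_maxReach hsc)⟩)
  exact maxReach_le_of_reach (ReflTransGen.single hbs)

end Psi

namespace IsLP

variable {n : ℕ} {A : Finset (ℕ × ℕ)} (hA : IsLP n A)
include hA

lemma mem_Icc_of_mem {a b : ℕ} (hab : (a, b) ∈ A) : a ∈ Icc 1 n ∧ b ∈ Icc 1 n := by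
  have := hA.1 _ hab
  simp only [mem_Icc]
  omega

lemma reach_le {x y : ℕ} (h : Reach A x y) : x ≤ y := by
  induction h with
  | refl => exact le_rfl
  | tail _ hyz ih => exact ih.trans (hA.1 _ hyz).2.1.le

lemma reach_total {b b' c : ℕ} (h : Reach A b c) (h' : Reach A b' c) :
    Reach A b b' ∨ Reach A b' b := by
  have hU : Relator.RightUnique (Function.swap fun x y => (x, y) ∈ A) :=
    fun _ _ _ hb hc => hA.2 _ hb _ hc rfl
  exact (ReflTransGen.total_of_right_unique hU (reflTransGen_swap.2 h)
    (reflTransGen_swap.2 h')).symm.imp reflTransGen_swap.1 reflTransGen_swap.1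

lemma reach_of_reach_of_mem {a b c : ℕ} (h : Reach A a b) (hab : a ≠ b) (hcb : (c, b) ∈ A) :
    Reach A a c := by
  rcases h.cases_tail with rfl | ⟨z, haz, hzb⟩
  · exact absurd rfl hab
  · obtain rfl : z = c := hA.2 _ hzb _ hcb rfl
    exact haz

/-- Arcs of one block do not cross, so the block is a chain. -/
lemma le_of_maxReach_eq {x w y w' : ℕ} (hxw : (x, w) ∈ A) (hyw' : (y, w') ∈ A)
    (hw : maxReach A w = maxReach A w') (hxy : x < y) : w ≤ y := by
  rcases hA.reach_total (reach_maxReach (x := w)) (hw ▸ reach_maxReach (x := w')) with h | h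
  · by_cases hww : w = w'
    · subst hww
      exact absurd (hA.2 _ hxw _ hyw' rfl) hxy.ne
    · exact hA.reach_le (hA.reach_of_reach_of_mem h hww hyw')
  · have hyw := (hA.1 _ hyw').2.1
    have hw'w := hA.reach_le h
    have := hA.reach_le (hA.reach_of_reach_of_mem (ReflTransGen.head hyw' h) (by omega) hxw)
    omega

lemma isDest_maxReach {a b : ℕ} (hab : (a, b) ∈ A) : IsDest A (maxReach A b) := by
  refine ⟨?_, fun p hp hu => ?_⟩
  · rcases (reach_maxReach (A := A) (x := b)).cases_tail with h | ⟨z, -, hz⟩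
    · exact ⟨(a, b), hab, h.symm⟩
    · exact ⟨_, hz, rfl⟩
  · obtain ⟨u, v⟩ := p
    obtain rfl : u = _ := hu
    have := le_maxReach (reach_maxReach.tail hp)
    have := (hA.1 _ hp).2.1
    omega

lemma lt_of_mem_blockRows {r c : ℕ} (hr : r ∈ blockRows A c) : r < c := by
  obtain ⟨s, hrs, rfl⟩ := mem_blockRows.1 hr
  exact (hA.1 _ hrs).2.1.trans_le (le_maxReach ReflTransGen.refl)

lemma mem_consecPairs_block_iff {a b c : ℕ} :
    (a, b) ∈ consecPairs (insert c (blockRows A c)) ↔ (a, b) ∈ A ∧ maxReach A b = c := by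
  have hle : ∀ v ∈ insert c (blockRows A c), v ≤ c := fun v hv =>
    (mem_insert.1 hv).elim le_of_eq fun hv => (hA.lt_of_mem_blockRows hv).le
  rw [mem_consecPairs]
  constructor
  · rintro ⟨ha, hb, hab, hmid⟩
    have ha' : a ∈ blockRows A c := (mem_insert.1 ha).resolve_left (by have := hle b hb; omega)
    obtain ⟨w, haw, rfl⟩ := mem_blockRows.1 ha'
    have hw := mem_insert_blockRows_maxReach (A := A) (b := w)
    have hbw : b ≤ w := not_lt.1 fun hwb => hmid w hw ⟨(hA.1 _ haw).2.1, hwb⟩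
    rcases hbw.eq_or_lt with rfl | hbw
    · exact ⟨haw, rfl⟩
    have hb' : b ∈ blockRows A (maxReach A w) :=
      (mem_insert.1 hb).resolve_left (by have := hle w hw; omega)
    obtain ⟨w', hbw', hw'⟩ := mem_blockRows.1 hb'
    have := hA.le_of_maxReach_eq haw hbw' hw'.symm hab
    omega
  · rintro ⟨hab, rfl⟩
    refine ⟨mem_insert_of_mem (mem_blockRows.2 ⟨b, hab, rfl⟩), mem_insert_blockRows_maxReach,
      (hA.1 _ hab).2.1, fun k hk ⟨hak, hkb⟩ => ?_⟩
    rcases mem_insert.1 hk with rfl | hk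
    · exact hkb.not_ge (le_maxReach ReflTransGen.refl)
    · obtain ⟨w, hkw, hw⟩ := mem_blockRows.1 hk
      exact hkb.not_ge (hA.le_of_maxReach_eq hab hkw hw.symm hak)

lemma isLeftCell_iff {r c : ℕ} (hr : r ∈ blockRows A c) :
    IsLeftCell A (r, c) ↔ ∃ r' ∈ blockRows A c, r' < r := by
  constructor
  · rintro ⟨⟨a, har⟩, hrc⟩
    exact ⟨a, mem_blockRows.2 ⟨r, har, hrc⟩, (hA.1 _ har).2.1⟩
  · rintro ⟨r', hr', hlt⟩
    obtain ⟨z, -, hz⟩ := exists_consecPairs_snd (mem_insert_of_mem hr') (mem_insert_of_mem hr) hlt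
    obtain ⟨hzr, hrc⟩ := hA.mem_consecPairs_block_iff.1 hz
    exact ⟨⟨z, hzr⟩, hrc⟩

lemma Phi_Psi : Phi (Psi A) = A := by
  ext ⟨a, b⟩
  rw [mem_Phi]
  constructor
  · rintro ⟨c, -, h⟩
    rw [colRows_Psi, hA.mem_consecPairs_block_iff] at h
    exact h.1
  · intro hab
    refine ⟨maxReach A b, mem_dests.2 (hA.isDest_maxReach hab), ?_⟩
    rw [colRows_Psi, hA.mem_consecPairs_block_iff]
    exact ⟨hab, rfl⟩

lemma Psi_isAT : IsAT n (Psi A).1 (Psi A).2.1 (Psi A).2.2 := by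
  refine ⟨fun c hc => ?_, disjoint_filter_filter_not _ _ _, fun ⟨r, c⟩ h => ?_,
    fun ⟨r, c⟩ h c' hcc' h' => ?_, fun ⟨r, c⟩ h r' hrr' h' => ?_⟩
  · obtain ⟨⟨p, hp, rfl⟩, -⟩ := mem_dests.1 hc
    exact (hA.mem_Icc_of_mem hp).2
  · rw [Psi_left_union_up, mem_arrowCells] at h
    obtain ⟨s, hrs, hsc⟩ := mem_blockRows.1 h
    refine ⟨(hA.mem_Icc_of_mem hrs).1, fun hr => ?_, ?_, hA.lt_of_mem_blockRows h⟩
    · exact (mem_dests.1 hr).2 _ hrs rfl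
    · exact mem_dests.2 (hsc ▸ hA.isDest_maxReach hrs)
  · rw [Psi_left_union_up, mem_arrowCells, mem_blockRows] at h'
    obtain ⟨s', hrs', hs'⟩ := h'
    have hrc : maxReach A r = c := ((mem_filter.1 h).2).2
    have : maxReach A s' ≤ maxReach A r := maxReach_le_of_reach (ReflTransGen.single hrs')
    omega
  · rw [Psi_left_union_up, mem_arrowCells] at h'
    obtain ⟨hrc, hnot⟩ := mem_filter.1 h
    exact hnot ((hA.isLeftCell_iff (mem_arrowCells.1 hrc)).2 ⟨r', h', hrr'⟩)

lemma Psi_hasUp : ∀ c ∈ (Psi A).1, ∃ p ∈ (Psi A).2.2, p.2 = c := by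
  intro c hc
  obtain ⟨⟨⟨a, c⟩, hac, rfl⟩, hout⟩ := mem_dests.1 hc
  have hne : (blockRows A c).Nonempty :=
    ⟨a, mem_blockRows.2 ⟨c, hac, maxReach_eq_self hout⟩⟩
  have hmin := min'_mem _ hne
  refine ⟨((blockRows A c).min' hne, c), mem_filter.2 ⟨mem_arrowCells.2 hmin, ?_⟩, rfl⟩
  rw [hA.isLeftCell_iff hmin]
  rintro ⟨r', hr', hlt⟩
  exact hlt.not_ge (min'_le _ _ hr')

end IsLP

namespace IsAT

variable {n : ℕ} {C : Finset ℕ} {L U : Finset (ℕ × ℕ)} (hAT : IsAT n C L U)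
include hAT

lemma arrow {r c : ℕ} (h : (r, c) ∈ L ∪ U) : r ∈ Icc 1 n ∧ r ∉ C ∧ c ∈ C ∧ r < c :=
  hAT.2.2.1 _ h

lemma le_of_left {r c c' : ℕ} (h : (r, c) ∈ L) (h' : (r, c') ∈ L ∪ U) : c' ≤ c :=
  not_lt.1 fun hlt => hAT.2.2.2.1 _ h c' hlt h'

lemma le_of_up {u r c : ℕ} (h : (u, c) ∈ U) (h' : (r, c) ∈ L ∪ U) : u ≤ r :=
  not_lt.1 fun hlt => hAT.2.2.2.2 _ h r hlt h'

lemma left_of_lt {a b c : ℕ} (ha : (a, c) ∈ L ∪ U) (hb : (b, c) ∈ L ∪ U) (hab : a < b) :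
    (b, c) ∈ L :=
  (mem_union.1 hb).resolve_right fun hbU => (hab.trans_le (hAT.le_of_up hbU ha)).false

lemma of_mem_consecPairs {a b c : ℕ} (h : (a, b) ∈ consecPairs (insert c (colRows L U c))) :
    (a, c) ∈ L ∪ U ∧ a < b ∧ (b = c ∨ (b, c) ∈ L) := by
  obtain ⟨ha, hb, hab, -⟩ := mem_consecPairs.1 h
  have hb' : b = c ∨ (b, c) ∈ L ∪ U := (mem_insert.1 hb).imp_right mem_colRows.1
  have haS : (a, c) ∈ L ∪ U := by
    refine (mem_insert.1 ha).elim (fun hac => ?_) mem_colRows.1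
    rcases hb' with rfl | hbS
    · omega
    · have := (hAT.arrow hbS).2.2.2
      omega
  exact ⟨haS, hab, hb'.imp_right fun hbS => hAT.left_of_lt haS hbS hab⟩

lemma not_mem_fst_Phi {c : ℕ} (hc : c ∈ C) : ∀ q ∈ Phi (C, L, U), q.1 ≠ c := by
  rintro ⟨a, b⟩ hq rfl
  obtain ⟨c', -, h⟩ := mem_Phi.1 hq
  exact (hAT.arrow (hAT.of_mem_consecPairs h).1).2.1 hc

lemma reach_Phi_of_mem_colRows {b c : ℕ} (hc : c ∈ C) (hb : b ∈ colRows L U c) :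
    Reach (Phi (C, L, U)) b c :=
  ReflTransGen.mono (fun _ _ h => mem_Phi.2 ⟨c, hc, h⟩) _ _
    (reflTransGen_consecPairs (mem_insert_of_mem hb) (mem_insert_self c _)
      (hAT.arrow (mem_colRows.1 hb)).2.2.2.le)

lemma le_of_reach_Phi {b v c : ℕ} (hv : Reach (Phi (C, L, U)) b v) (hb : (b, c) ∈ L) :
    v ≤ c := by
  induction hv using ReflTransGen.head_induction_on generalizing c with
  | refl => exact (hAT.arrow (mem_union_left _ hb)).2.2.2.le
  | head hbx hxv ih =>
    obtain ⟨c', hc', h⟩ := mem_Phi.1 hbx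
    obtain ⟨hbS, -, hx⟩ := hAT.of_mem_consecPairs h
    have hc'c := hAT.le_of_left hb hbS
    rcases hx with rfl | hxL
    · rcases hxv.cases_head with rfl | ⟨z, hz, -⟩
      · exact hc'c
      · exact absurd rfl (hAT.not_mem_fst_Phi hc' _ hz)
    · exact (ih hxL).trans hc'c

lemma maxReach_Phi_of_mem_C {c : ℕ} (hc : c ∈ C) : maxReach (Phi (C, L, U)) c = c :=
  maxReach_eq_self (hAT.not_mem_fst_Phi hc)

lemma maxReach_Phi_of_left {b c : ℕ} (hb : (b, c) ∈ L) : maxReach (Phi (C, L, U)) b = c :=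
  le_antisymm (hAT.le_of_reach_Phi reach_maxReach hb)
    (le_maxReach (hAT.reach_Phi_of_mem_colRows (hAT.arrow (mem_union_left _ hb)).2.2.1
      (mem_colRows.2 (mem_union_left _ hb))))

lemma maxReach_Phi_of_mem_consecPairs {a b c : ℕ} (hc : c ∈ C)
    (h : (a, b) ∈ consecPairs (insert c (colRows L U c))) : maxReach (Phi (C, L, U)) b = c := by
  rcases (hAT.of_mem_consecPairs h).2.2 with rfl | hbL
  · exact hAT.maxReach_Phi_of_mem_C hc
  · exact hAT.maxReach_Phi_of_left hbL

lemma Phi_isLP : IsLP n (Phi (C, L, U)) := by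
  refine ⟨fun ⟨a, b⟩ hab => ?_, fun ⟨a, b⟩ hab ⟨a', b'⟩ hab' hbb => ?_⟩
  · obtain ⟨c, hc, h⟩ := mem_Phi.1 hab
    obtain ⟨haS, hab, hb⟩ := hAT.of_mem_consecPairs h
    have ha := mem_Icc.1 (hAT.arrow haS).1
    have hbc : b ≤ c := hb.elim le_of_eq fun hbL => (hAT.arrow (mem_union_left _ hbL)).2.2.2.le
    have := mem_Icc.1 (hAT.1 hc)
    exact ⟨ha.1, hab, by omega⟩
  · obtain rfl : b = b' := hbb
    obtain ⟨c, hc, h⟩ := mem_Phi.1 hab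
    obtain ⟨c', hc', h'⟩ := mem_Phi.1 hab'
    have hcc : c = c' :=
      (hAT.maxReach_Phi_of_mem_consecPairs hc h).symm.trans
        (hAT.maxReach_Phi_of_mem_consecPairs hc' h')
    subst hcc
    exact consecPairs_left_unique h h'

lemma arrowCells_Phi : arrowCells (Phi (C, L, U)) = L ∪ U := by
  ext ⟨r, c⟩
  rw [mem_arrowCells, mem_blockRows]
  constructor
  · rintro ⟨s, hrs, rfl⟩
    obtain ⟨c', hc', h⟩ := mem_Phi.1 hrs
    rw [hAT.maxReach_Phi_of_mem_consecPairs hc' h]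
    exact (hAT.of_mem_consecPairs h).1
  · intro hrc
    have hc := (hAT.arrow hrc).2.2.1
    obtain ⟨z, -, hz⟩ := exists_consecPairs_fst (mem_insert_of_mem (mem_colRows.2 hrc))
      (mem_insert_self c _) (hAT.arrow hrc).2.2.2
    exact ⟨z, mem_Phi.2 ⟨c, hc, hz⟩, hAT.maxReach_Phi_of_mem_consecPairs hc hz⟩

section HasUp

variable (hstar : ∀ c ∈ C, ∃ p ∈ U, p.2 = c)
include hstar

lemma dests_Phi : dests (Phi (C, L, U)) = C := by
  ext c
  rw [mem_dests]
  constructor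
  · rintro ⟨⟨⟨a, b⟩, hab, rfl⟩, hout⟩
    obtain ⟨c', hc', h⟩ := mem_Phi.1 hab
    have := hAT.maxReach_Phi_of_mem_consecPairs hc' h
    rw [maxReach_eq_self hout] at this
    exact this ▸ hc'
  · intro hc
    obtain ⟨⟨u, c⟩, hu, rfl⟩ := hstar c hc
    have huS : (u, c) ∈ L ∪ U := mem_union_right _ hu
    obtain ⟨z, -, hz⟩ := exists_consecPairs_snd (mem_insert_of_mem (mem_colRows.2 huS))
      (mem_insert_self c _) (hAT.arrow huS).2.2.2
    exact ⟨⟨_, mem_Phi.2 ⟨c, hc, hz⟩, rfl⟩, hAT.not_mem_fst_Phi hc⟩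

lemma isLeftCell_Phi_iff {r c : ℕ} (hrc : (r, c) ∈ L ∪ U) :
    IsLeftCell (Phi (C, L, U)) (r, c) ↔ (r, c) ∈ L := by
  constructor
  · rintro ⟨⟨a, har⟩, hr⟩
    obtain ⟨c', hc', h⟩ := mem_Phi.1 har
    rcases (hAT.of_mem_consecPairs h).2.2 with rfl | hrL
    · exact absurd hc' (hAT.arrow hrc).2.1
    · have : c' = c := (hAT.maxReach_Phi_of_left hrL).symm.trans hr
      exact this ▸ hrL
  · intro hrL
    have hc := (hAT.arrow hrc).2.2.1
    obtain ⟨⟨u, c⟩, hu, rfl⟩ := hstar c hc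
    have huS : (u, c) ∈ L ∪ U := mem_union_right _ hu
    have hur : u < r := (hAT.le_of_up hu hrc).lt_of_ne fun hur =>
      disjoint_left.1 hAT.2.1 hrL (hur ▸ hu)
    obtain ⟨z, -, hz⟩ := exists_consecPairs_snd (mem_insert_of_mem (mem_colRows.2 huS))
      (mem_insert_of_mem (mem_colRows.2 hrc)) hur
    exact ⟨⟨z, mem_Phi.2 ⟨c, hc, hz⟩⟩, hAT.maxReach_Phi_of_left hrL⟩

lemma Psi_Phi : Psi (Phi (C, L, U)) = (C, L, U) := by
  have hL : ∀ p ∈ L ∪ U, IsLeftCell (Phi (C, L, U)) p ↔ p ∈ L :=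
    fun _ hp => hAT.isLeftCell_Phi_iff hstar hp
  simp only [Psi, hAT.dests_Phi hstar, hAT.arrowCells_Phi, Prod.mk.injEq, true_and]
  constructor
  · ext p
    rw [mem_filter]
    exact ⟨fun h => (hL p h.1).1 h.2,
      fun h => ⟨mem_union_left _ h, (hL p (mem_union_left _ h)).2 h⟩⟩
  · ext p
    rw [mem_filter]
    refine ⟨fun h => (mem_union.1 h.1).resolve_left fun hp => h.2 ((hL p h.1).2 hp),
      fun h => ⟨mem_union_right _ h, fun hp => ?_⟩⟩
    exact disjoint_left.1 hAT.2.1 ((hL p (mem_union_right _ h)).1 hp) h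

end HasUp

end IsAT

/-- the map `Φ` is a bijection from alternative tableaux of
size `n` in which every column contains an up arrow onto linked partitions
of `{1,…,n}`. -/
theorem Phi_bijection (n : ℕ) :
    Set.BijOn Phi (ATstar n : Set _) (LP n : Set _) := by
  have hPhi : ∀ T ∈ ATstar n, Phi T ∈ LP n ∧ Psi (Phi T) = T := by
    rintro ⟨C, L, U⟩ hT
    obtain ⟨hAT, hstar⟩ := mem_ATstar_iff.1 hT
    exact ⟨mem_LP_iff.2 hAT.Phi_isLP, hAT.Psi_Phi hstar⟩
  have hPsi : ∀ A ∈ LP n, Psi A ∈ ATstar n ∧ Phi (Psi A) = A := fun A hA =>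
    have hA := mem_LP_iff.1 hA
    ⟨mem_ATstar_iff.2 ⟨hA.Psi_isAT, hA.Psi_hasUp⟩, hA.Phi_Psi⟩
  exact Set.InvOn.bijOn ⟨fun T hT => (hPhi T hT).2, fun A hA => (hPsi A hA).2⟩
    (fun T hT => (hPhi T hT).1) fun A hA => (hPsi A hA).1
end
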